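/- arXiv:2412.15910 — 8 statements merged into one kernel-verified Lean document; each statement's English description precedes it below -/
import Mathlib

section
/- Let φ ∈ ℝ² be a nonzero vector, let A be a real symmetric 2×2 matrix, and let e ∈ ℝ² be a unit vector with ⟨e, φ⟩ = 0. Define the symmetric 3×3 matrix M with M₁₁ = 0, first row and first column (after the corner) equal to −φ, and lower-right 2×2 block equal to A. If ⟨A e, e⟩ < 0, then M is invertible and has exactly one positive eigenvalue and two negative eigenvalues (so its signature, the number of positive minus the number of negative eigenvalues, equals −1); if ⟨A e, e⟩ > 0, then M has exactly two positive and one negative eigenvalue. -/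
/-!
Orthogonality to `φ ≠ 0` forces `e` to be a unit multiple of the rotated vector `(-φ 1, φ 0)`,
which turns the cofactor expansion into `det M = -|φ|² ⟨A e, e⟩`. Because of the zero corner, the
quadratic form of `M` on vectors `(t, φ)` is `-2t|φ|² + ⟨A φ, φ⟩`, so it takes both signs and `M`
has a positive and a negative eigenvalue. With three eigenvalues whose product is `det M ≠ 0`, the
sign of the determinant then fixes the remaining one.
-/

open scoped Matrix

namespace Matrix.IsHermitian

variable {n 𝕜 : Type*} [Fintype n] [DecidableEq n] [RCLike 𝕜] {A : Matrix n n 𝕜}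

theorem exists_eigenvalues_neg_of_re_dotProduct_mulVec_neg (hA : A.IsHermitian) {x : n → 𝕜}
    (hx : RCLike.re (star x ⬝ᵥ (A *ᵥ x)) < 0) : ∃ i, hA.eigenvalues i < 0 := by
  by_contra! h
  exact hx.not_ge ((hA.posSemidef_iff_eigenvalues_nonneg.mpr h).re_dotProduct_nonneg x)

theorem exists_eigenvalues_pos_of_re_dotProduct_mulVec_pos (hA : A.IsHermitian) {x : n → 𝕜}
    (hx : 0 < RCLike.re (star x ⬝ᵥ (A *ᵥ x))) : ∃ i, 0 < hA.eigenvalues i := by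
  obtain ⟨i, hi⟩ := hA.neg.exists_eigenvalues_neg_of_re_dotProduct_mulVec_neg (x := x)
    (by simpa [neg_mulVec] using hx)
  have hmem : hA.neg.eigenvalues i ∈ spectrum ℝ (-A) :=
    hA.neg.spectrum_real_eq_range_eigenvalues ▸ ⟨i, rfl⟩
  rw [← spectrum.neg_eq, Set.mem_neg, hA.spectrum_real_eq_range_eigenvalues] at hmem
  obtain ⟨j, hj⟩ := hmem
  exact ⟨j, by linarith⟩

end Matrix.IsHermitian

theorem card_filter_pos_eq_one_and_card_filter_neg_eq_two_of_prod_pos {l : Fin 3 → ℝ}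
    (h : 0 < ∏ i, l i) (hn : ∃ i, l i < 0) :
    (Finset.univ.filter fun i => 0 < l i).card = 1 ∧
      (Finset.univ.filter fun i => l i < 0).card = 2 := by
  rw [Fin.prod_univ_three] at h
  simp only [Finset.card_filter, Fin.sum_univ_three]
  rcases mul_pos_iff.mp h with ⟨h01, h2⟩ | ⟨h01, h2⟩
  · rcases mul_pos_iff.mp h01 with ⟨h0, h1⟩ | ⟨h0, h1⟩
    · obtain ⟨i, hi⟩ := hn
      have : 0 < l i := by fin_cases i <;> assumption
      linarith
    · simp [h0, h1, h2, h0.not_gt, h1.not_gt, h2.not_gt]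
  · rcases mul_neg_iff.mp h01 with ⟨h0, h1⟩ | ⟨h0, h1⟩ <;>
      simp [h0, h1, h2, h0.not_gt, h1.not_gt, h2.not_gt]

theorem card_filter_pos_eq_two_and_card_filter_neg_eq_one_of_prod_neg {l : Fin 3 → ℝ}
    (h : ∏ i, l i < 0) (hp : ∃ i, 0 < l i) :
    (Finset.univ.filter fun i => 0 < l i).card = 2 ∧
      (Finset.univ.filter fun i => l i < 0).card = 1 := by
  have key := card_filter_pos_eq_one_and_card_filter_neg_eq_two_of_prod_pos (l := -l)
    (by simp only [Pi.neg_apply, Finset.prod_neg, Finset.card_univ, Fintype.card_fin]; linarith)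
    (by simpa using hp)
  simp only [Pi.neg_apply, neg_pos, neg_lt_zero] at key
  exact key.symm

def borderedHessian (φ : Fin 2 → ℝ) (A : Matrix (Fin 2) (Fin 2) ℝ) : Matrix (Fin 3) (Fin 3) ℝ :=
  !![0, -φ 0, -φ 1; -φ 0, A 0 0, A 0 1; -φ 1, A 1 0, A 1 1]

theorem det_borderedHessian {φ e : Fin 2 → ℝ} (A : Matrix (Fin 2) (Fin 2) ℝ)
    (he_unit : e ⬝ᵥ e = 1) (he_orth : e ⬝ᵥ φ = 0) :
    (borderedHessian φ A).det = -((φ ⬝ᵥ φ) * (e ⬝ᵥ A *ᵥ e)) := by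
  simp only [dotProduct, Matrix.mulVec, Fin.sum_univ_two] at he_unit he_orth ⊢
  simp only [borderedHessian, Matrix.det_fin_three, Matrix.of_apply, Matrix.cons_val',
    Matrix.cons_val_zero, Matrix.cons_val_one, Matrix.cons_val, Matrix.cons_val_fin_one]
  -- `e` is a unit multiple of `(-φ 1, φ 0)`, and the determinant is `-(-φ 1, φ 0)ᵀ A (-φ 1, φ 0)`.
  linear_combination
    ((A 0 0) * (e 0 * φ 0 - e 1 * φ 1) + (A 1 1) * (e 1 * φ 1 - e 0 * φ 0)
      + (A 0 1 + A 1 0) * (e 1 * φ 0 + e 0 * φ 1)) * he_orth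
    + (φ 1 ^ 2 * A 0 0 + φ 0 ^ 2 * A 1 1 - φ 0 * φ 1 * (A 0 1 + A 1 0)) * he_unit

theorem dotProduct_borderedHessian_mulVec (φ : Fin 2 → ℝ) (A : Matrix (Fin 2) (Fin 2) ℝ) (t : ℝ) :
    ![t, φ 0, φ 1] ⬝ᵥ (borderedHessian φ A *ᵥ ![t, φ 0, φ 1]) =
      -2 * t * (φ ⬝ᵥ φ) + φ ⬝ᵥ A *ᵥ φ := by
  simp only [borderedHessian, dotProduct, Matrix.mulVec, Matrix.of_apply, Matrix.cons_val',
    Matrix.cons_val_zero, Matrix.cons_val_one, Matrix.cons_val, Matrix.cons_val_fin_one,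
    Fin.sum_univ_three, Fin.sum_univ_two]
  ring

theorem exists_dotProduct_borderedHessian_mulVec_eq {φ : Fin 2 → ℝ} (hφ : φ ≠ 0)
    (A : Matrix (Fin 2) (Fin 2) ℝ) (r : ℝ) :
    ∃ x, x ⬝ᵥ (borderedHessian φ A *ᵥ x) = r := by
  have hφφ : φ ⬝ᵥ φ ≠ 0 := dotProduct_self_eq_zero.not.mpr hφ
  refine ⟨![(φ ⬝ᵥ A *ᵥ φ - r) / (2 * (φ ⬝ᵥ φ)), φ 0, φ 1], ?_⟩
  rw [dotProduct_borderedHessian_mulVec]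
  field_simp
  ring

theorem stmt_5_general (φ e : Fin 2 → ℝ) (A : Matrix (Fin 2) (Fin 2) ℝ)
    (hφ : φ ≠ 0)
    (he_unit : e 0 ^ 2 + e 1 ^ 2 = 1)
    (he_orth : e 0 * φ 0 + e 1 * φ 1 = 0)
    (M : Matrix (Fin 3) (Fin 3) ℝ)
    (hM : M = !![0, -φ 0, -φ 1; -φ 0, A 0 0, A 0 1; -φ 1, A 1 0, A 1 1])
    (hHerm : M.IsHermitian) :
    (e ⬝ᵥ A.mulVec e < 0 →
        IsUnit M ∧
        (Finset.univ.filter fun i => 0 < hHerm.eigenvalues i).card = 1 ∧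
        (Finset.univ.filter fun i => hHerm.eigenvalues i < 0).card = 2) ∧
    (0 < e ⬝ᵥ A.mulVec e →
        (Finset.univ.filter fun i => 0 < hHerm.eigenvalues i).card = 2 ∧
        (Finset.univ.filter fun i => hHerm.eigenvalues i < 0).card = 1) := by
  change M = borderedHessian φ A at hM
  subst hM
  have hφφ : 0 < φ ⬝ᵥ φ := by simpa using Matrix.dotProduct_self_star_pos_iff.mpr hφ
  have hdet : (borderedHessian φ A).det = -((φ ⬝ᵥ φ) * (e ⬝ᵥ A *ᵥ e)) :=
    det_borderedHessian A (by simpa [dotProduct, sq] using he_unit)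
      (by simpa [dotProduct] using he_orth)
  have hprod : ∏ i, hHerm.eigenvalues i = (borderedHessian φ A).det := by
    simpa using hHerm.det_eq_prod_eigenvalues.symm
  obtain ⟨x, hx⟩ := exists_dotProduct_borderedHessian_mulVec_eq hφ A (-1)
  obtain ⟨y, hy⟩ := exists_dotProduct_borderedHessian_mulVec_eq hφ A 1
  have hneg := hHerm.exists_eigenvalues_neg_of_re_dotProduct_mulVec_neg (x := x) (by simp [hx])
  have hpos := hHerm.exists_eigenvalues_pos_of_re_dotProduct_mulVec_pos (x := y) (by simp [hy])
  refine ⟨fun hq => ?_, fun hq => ?_⟩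
  · have hprod_pos : 0 < ∏ i, hHerm.eigenvalues i := by
      rw [hprod, hdet]
      exact neg_pos.mpr (mul_neg_of_pos_of_neg hφφ hq)
    exact ⟨(Matrix.isUnit_iff_isUnit_det _).mpr (hprod ▸ hprod_pos).ne'.isUnit,
      card_filter_pos_eq_one_and_card_filter_neg_eq_two_of_prod_pos hprod_pos hneg⟩
  · have hprod_neg : ∏ i, hHerm.eigenvalues i < 0 := by
      rw [hprod, hdet]
      exact neg_neg_of_pos (mul_pos hφφ hq)
    exact card_filter_pos_eq_two_and_card_filter_neg_eq_one_of_prod_neg hprod_neg hpos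

/-- Signature of the bordered Hessian `M = [[0, −φᵀ], [−φ, A]]`: if
`⟨A e, e⟩ < 0` (where `e` is a unit vector orthogonal to `φ ≠ 0`), then `M` is
invertible with exactly one positive and two negative eigenvalues (signature
`−1`); if `⟨A e, e⟩ > 0`, then `M` has exactly two positive and one negative
eigenvalue. -/
theorem stmt_5 (φ e : Fin 2 → ℝ) (A : Matrix (Fin 2) (Fin 2) ℝ)
    (hφ : φ ≠ 0) (hA : A.IsSymm)
    (he_unit : e 0 ^ 2 + e 1 ^ 2 = 1)
    (he_orth : e 0 * φ 0 + e 1 * φ 1 = 0)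
    (M : Matrix (Fin 3) (Fin 3) ℝ)
    (hM : M = !![0, -φ 0, -φ 1; -φ 0, A 0 0, A 0 1; -φ 1, A 1 0, A 1 1])
    (hHerm : M.IsHermitian) :
    (e ⬝ᵥ A.mulVec e < 0 →
        IsUnit M ∧
        (Finset.univ.filter fun i => 0 < hHerm.eigenvalues i).card = 1 ∧
        (Finset.univ.filter fun i => hHerm.eigenvalues i < 0).card = 2) ∧
    (0 < e ⬝ᵥ A.mulVec e →
        (Finset.univ.filter fun i => 0 < hHerm.eigenvalues i).card = 2 ∧
        (Finset.univ.filter fun i => hHerm.eigenvalues i < 0).card = 1) :=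
  stmt_5_general φ e A hφ he_unit he_orth M hM hHerm
end

section
/- Let I ⊆ ℝ be an open interval and α̃ ∈ I. Let H : ℝ² → ℝ and Φ : ℝ² × ℝ → ℝ be twice continuously differentiable, and let x : I → ℝ² and ν : I → ℝ be continuously differentiable with ν(α) ≠ 0 for all α ∈ I. Assume that for all α ∈ I: H(x(α)) = 0 and ∇H(x(α)) = ν(α) ∇ₓΦ(x(α), α), where ∇ₓΦ denotes the gradient of Φ in its first (ℝ²) argument. Set x̃ := x(α̃) and Q(α) := Φ(x̃, α) − Φ(x(α), α). Then: (i) Q(α̃) = 0; (ii) Q′(α) = ∂_αΦ(x̃, α) − ∂_αΦ(x(α), α) for all α ∈ I, and in particular Q′(α̃) = 0; (iii) Q is twice differentiable at α̃ and Q″(α̃) = ∇ₓ²Φ(x̃, α̃)(x′(α̃), x′(α̃)) − (1/ν(α̃)) ∇²H(x̃)(x′(α̃), x′(α̃)), where ∇²H and ∇ₓ²Φ denote the Hessians (of H, and of Φ in its first argument) as bilinear forms. -/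
/-!
Differentiating `H(x(α)) = 0` and using `∇H = ν ∇ₓΦ` gives `∂ₓΦ(x(α), α) x′(α) = 0`, so the
`x′`-term drops out of `Q′`. Differentiating once more, `Q″(α̃) = −∂_α∂ₓΦ(x̃, α̃) x′` with
`x′ = x′(α̃)`. This mixed partial is found by differentiating `∂ₓH(x(α)) x′ = ν(α) ∂ₓΦ(x(α), α) x′`
at `α̃` with the vector `x′` held fixed, so that no second derivative of `x` is needed: since
`∂ₓH(x̃) x′ = 0`, this gives `∇²H(x̃)(x′, x′) = ν(α̃) (∇ₓ²Φ(x′, x′) + ∂_α∂ₓΦ x′)`.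
-/

open Filter Topology ContinuousLinearMap

section SliceCalculus

variable {𝕜 E F G : Type*} [NontriviallyNormedField 𝕜]
  [NormedAddCommGroup E] [NormedSpace 𝕜 E] [NormedAddCommGroup F] [NormedSpace 𝕜 F]
  [NormedAddCommGroup G] [NormedSpace 𝕜 G]

theorem HasFDerivAt.comp_hasDerivAt_prodMk {f : E × 𝕜 → F} {f' : E × 𝕜 →L[𝕜] F} {γ : 𝕜 → E}
    {γ' : E} {α : 𝕜} (hf : HasFDerivAt f f' (γ α, α)) (hγ : HasDerivAt γ γ' α) :
    HasDerivAt (fun β => f (γ β, β)) (f' (γ', 1)) α :=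
  hf.comp_hasDerivAt (f := fun β => (γ β, β)) α (hγ.prodMk (hasDerivAt_id α))

theorem HasFDerivAt.hasDerivAt_prodMk_left {f : E × 𝕜 → F} {f' : E × 𝕜 →L[𝕜] F} {z : E}
    {α : 𝕜} (hf : HasFDerivAt f f' (z, α)) :
    HasDerivAt (fun β => f (z, β)) (f' (0, 1)) α :=
  hf.comp_hasDerivAt_prodMk (γ := fun _ => z) (hasDerivAt_const α z)

theorem fderiv_comp_prodMk_const_apply {f : E × G → F} {z : E} {a : G}
    (hf : DifferentiableAt 𝕜 f (z, a)) (v : E) :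
    fderiv 𝕜 (fun w => f (w, a)) z v = fderiv 𝕜 f (z, a) (v, 0) := by
  have h : HasFDerivAt (fun w => f (w, a)) ((fderiv 𝕜 f (z, a)).comp (inl 𝕜 E G)) z :=
    hf.hasFDerivAt.comp z ((hasFDerivAt_id z).prodMk (hasFDerivAt_const a z))
  simp [h.fderiv]

theorem iteratedFDeriv_comp_prodMk_const {f : E × G → F} {n : ℕ} (hf : ContDiff 𝕜 n f)
    (z : E) (a : G) :
    iteratedFDeriv 𝕜 n (fun w => f (w, a)) z =
      (iteratedFDeriv 𝕜 n f (z, a)).compContinuousLinearMap fun _ => inl 𝕜 E G := by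
  have hfun : (fun w => f (w, a)) = (fun p => f (p + (0, a))) ∘ inl 𝕜 E G := by
    ext w; simp
  have hshift : ContDiff 𝕜 n fun p => f (p + (0, a)) := hf.comp (contDiff_id.add contDiff_const)
  rw [hfun, (inl 𝕜 E G).iteratedFDeriv_comp_right hshift z le_rfl, iteratedFDeriv_comp_add_right]
  simp

theorem ContDiff.differentiable_fderiv {f : E → F} {n : WithTop ℕ∞} (hf : ContDiff 𝕜 n f)
    (hn : 2 ≤ n) : Differentiable 𝕜 (fderiv 𝕜 f) :=
  (hf.fderiv_right (m := 1) hn).differentiable one_ne_zero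

-- Both sides equal `-D²f p (v, 0) (0, 1)`.
theorem IsSymmSndFDerivAt.fderiv_fderiv_inr_sub {f : E × 𝕜 → F} {p : E × 𝕜}
    (hf : IsSymmSndFDerivAt 𝕜 f p) (v : E) :
    fderiv 𝕜 (fderiv 𝕜 f) p (0, 1) (0, 1) - fderiv 𝕜 (fderiv 𝕜 f) p (v, 1) (0, 1)
      = fderiv 𝕜 (fderiv 𝕜 f) p (v, 0) (v, 0) - fderiv 𝕜 (fderiv 𝕜 f) p (v, 1) (v, 0) := by
  have hsplit : ((v, 1) : E × 𝕜) = (v, 0) + (0, 1) := by simp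
  rw [hsplit, map_add, add_apply, add_apply, hf (v, 0)]
  abel

theorem fderiv_apply_eq_zero_of_eventually_comp_eq_zero {H : E → F} {γ : 𝕜 → E} {γ' : E} {α : 𝕜}
    (hH : DifferentiableAt 𝕜 H (γ α)) (hγ : HasDerivAt γ γ' α)
    (h0 : ∀ᶠ β in 𝓝 α, H (γ β) = 0) :
    fderiv 𝕜 H (γ α) γ' = 0 :=
  (hH.hasFDerivAt.comp_hasDerivAt α hγ).unique ((hasDerivAt_const α 0).congr_of_eventuallyEq h0)

end SliceCalculus

section TangencyCurve

variable {E : Type*} [NormedAddCommGroup E] [NormedSpace ℝ E]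
  {H : E → ℝ} {Φ : E × ℝ → ℝ} {x : ℝ → E} {ν : ℝ → ℝ} {α : ℝ} {x' : E}

theorem fderiv_apply_inl_eq_zero_of_fderiv_eq_smul (hΦ : DifferentiableAt ℝ Φ (x α, α))
    (hH : DifferentiableAt ℝ H (x α)) (hx : HasDerivAt x x' α)
    (hH0 : ∀ᶠ β in 𝓝 α, H (x β) = 0) (hν : ν α ≠ 0)
    (hrel : fderiv ℝ H (x α) = ν α • fderiv ℝ (fun z => Φ (z, α)) (x α)) :
    fderiv ℝ Φ (x α, α) (x', 0) = 0 := by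
  have h := fderiv_apply_eq_zero_of_eventually_comp_eq_zero hH hx hH0
  rw [hrel, smul_apply, fderiv_comp_prodMk_const_apply hΦ, smul_eq_mul] at h
  exact (mul_eq_zero.1 h).resolve_left hν

theorem hasDerivAt_sub_comp_prodMk_of_tangent {z : E} (hz : DifferentiableAt ℝ Φ (z, α))
    (hΦ : DifferentiableAt ℝ Φ (x α, α)) (hx : HasDerivAt x x' α)
    (htan : fderiv ℝ Φ (x α, α) (x', 0) = 0) :
    HasDerivAt (fun β => Φ (z, β) - Φ (x β, β))
      (fderiv ℝ Φ (z, α) (0, 1) - fderiv ℝ Φ (x α, α) (0, 1)) α := by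
  have hsplit : ((x', 1) : E × ℝ) = (x', 0) + (0, 1) := by simp
  have h := hz.hasFDerivAt.hasDerivAt_prodMk_left.sub (hΦ.hasFDerivAt.comp_hasDerivAt_prodMk hx)
  rwa [hsplit, map_add, htan, zero_add] at h

theorem hasDerivAt_deriv_sub_comp_prodMk {z : E}
    (hz : DifferentiableAt ℝ (fderiv ℝ Φ) (z, α)) (hΦ : DifferentiableAt ℝ (fderiv ℝ Φ) (x α, α))
    (hx : HasDerivAt x x' α)
    (hQ' : ∀ᶠ β in 𝓝 α, deriv (fun β => Φ (z, β) - Φ (x β, β)) β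
      = fderiv ℝ Φ (z, β) (0, 1) - fderiv ℝ Φ (x β, β) (0, 1)) :
    HasDerivAt (deriv fun β => Φ (z, β) - Φ (x β, β))
      (fderiv ℝ (fderiv ℝ Φ) (z, α) (0, 1) (0, 1)
        - fderiv ℝ (fderiv ℝ Φ) (x α, α) (x', 1) (0, 1)) α := by
  have h := hz.hasFDerivAt.hasDerivAt_prodMk_left.sub (hΦ.hasFDerivAt.comp_hasDerivAt_prodMk hx)
  exact (h.clm_apply (hasDerivAt_const α ((0 : E), (1 : ℝ)))).congr_of_eventuallyEq hQ'
    |>.congr_deriv (by simp)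

theorem mul_fderiv_fderiv_apply_eq_of_fderiv_eq_smul (hΦ : Differentiable ℝ Φ)
    (hΦ2 : DifferentiableAt ℝ (fderiv ℝ Φ) (x α, α)) (hH2 : DifferentiableAt ℝ (fderiv ℝ H) (x α))
    (hx : HasDerivAt x x' α) (hν : DifferentiableAt ℝ ν α)
    (hrel : ∀ᶠ β in 𝓝 α, fderiv ℝ H (x β) = ν β • fderiv ℝ (fun z => Φ (z, β)) (x β))
    (htan : fderiv ℝ Φ (x α, α) (x', 0) = 0) :
    ν α * fderiv ℝ (fderiv ℝ Φ) (x α, α) (x', 1) (x', 0)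
      = fderiv ℝ (fderiv ℝ H) (x α) x' x' := by
  have hlhs : HasDerivAt (fun β => fderiv ℝ H (x β) x') (fderiv ℝ (fderiv ℝ H) (x α) x' x') α :=
    (apply ℝ ℝ x').hasFDerivAt.comp_hasDerivAt α (hH2.hasFDerivAt.comp_hasDerivAt α hx)
  have hrhs := hν.hasDerivAt.mul
    ((apply ℝ ℝ (x', (0 : ℝ))).hasFDerivAt.comp_hasDerivAt α
      (hΦ2.hasFDerivAt.comp_hasDerivAt_prodMk hx))
  have heq : (fun β => fderiv ℝ H (x β) x') =ᶠ[𝓝 α]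
      fun β => ν β * fderiv ℝ Φ (x β, β) (x', 0) := by
    filter_upwards [hrel] with β hβ
    rw [hβ, smul_apply, fderiv_comp_prodMk_const_apply (hΦ _), smul_eq_mul]
  have := hlhs.unique (hrhs.congr_of_eventuallyEq heq)
  simpa [htan] using this.symm

end TangencyCurve

theorem stmt_6_general (I : Set ℝ) (hIopen : IsOpen I)
    (αt : ℝ) (hαt : αt ∈ I)
    (H : EuclideanSpace ℝ (Fin 2) → ℝ)
    (Φ : EuclideanSpace ℝ (Fin 2) × ℝ → ℝ)
    (hH : ContDiff ℝ 2 H) (hΦ : ContDiff ℝ 2 Φ)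
    (x : ℝ → EuclideanSpace ℝ (Fin 2)) (ν : ℝ → ℝ)
    (hx : ContDiffOn ℝ 1 x I) (hν : ContDiffOn ℝ 1 ν I)
    (hνne : ∀ α ∈ I, ν α ≠ 0)
    (hH0 : ∀ α ∈ I, H (x α) = 0)
    (hgrad : ∀ α ∈ I, gradient H (x α) = ν α • gradient (fun z => Φ (z, α)) (x α)) :
    (Φ (x αt, αt) - Φ (x αt, αt) = 0) ∧
    (∀ α ∈ I, deriv (fun β => Φ (x αt, β) - Φ (x β, β)) α
        = deriv (fun β => Φ (x αt, β)) α - deriv (fun β => Φ (x α, β)) α) ∧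
    (deriv (fun β => Φ (x αt, β) - Φ (x β, β)) αt = 0) ∧
    DifferentiableAt ℝ (deriv (fun β => Φ (x αt, β) - Φ (x β, β))) αt ∧
    deriv (deriv (fun β => Φ (x αt, β) - Φ (x β, β))) αt
      = iteratedFDeriv ℝ 2 (fun z => Φ (z, αt)) (x αt) ![deriv x αt, deriv x αt]
        - (1 / ν αt) * iteratedFDeriv ℝ 2 H (x αt) ![deriv x αt, deriv x αt] := by
  have hΦd : Differentiable ℝ Φ := hΦ.differentiable (by norm_num)
  have hDΦ := hΦ.differentiable_fderiv le_rfl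
  have hI : ∀ α ∈ I, I ∈ 𝓝 α := fun α hα => hIopen.mem_nhds hα
  have hxd : ∀ α ∈ I, HasDerivAt x (deriv x α) α := fun α hα =>
    ((hx.differentiableOn one_ne_zero).differentiableAt (hI α hα)).hasDerivAt
  have hrel : ∀ α ∈ I, fderiv ℝ H (x α) = ν α • fderiv ℝ (fun z => Φ (z, α)) (x α) :=
    fun α hα => by rw [← toDual_gradient, hgrad α hα, map_smul, toDual_gradient]
  have htan : ∀ α ∈ I, fderiv ℝ Φ (x α, α) (deriv x α, 0) = 0 := fun α hα =>
    fderiv_apply_inl_eq_zero_of_fderiv_eq_smul (hΦd _) (hH.differentiable (by norm_num) _)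
      (hxd α hα) (eventually_of_mem (hI α hα) hH0) (hνne α hα) (hrel α hα)
  have hQ' : ∀ α ∈ I, HasDerivAt (fun β => Φ (x αt, β) - Φ (x β, β))
      (fderiv ℝ Φ (x αt, α) (0, 1) - fderiv ℝ Φ (x α, α) (0, 1)) α := fun α hα =>
    hasDerivAt_sub_comp_prodMk_of_tangent (hΦd _) (hΦd _) (hxd α hα) (htan α hα)
  have hQ'' := hasDerivAt_deriv_sub_comp_prodMk (hDΦ _) (hDΦ _) (hxd αt hαt)
    (eventually_of_mem (hI αt hαt) fun α hα => (hQ' α hα).deriv)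
  have hmixed := mul_fderiv_fderiv_apply_eq_of_fderiv_eq_smul hΦd (hDΦ _)
    (hH.differentiable_fderiv le_rfl _) (hxd αt hαt)
    ((hν.differentiableOn one_ne_zero).differentiableAt (hI αt hαt))
    (eventually_of_mem (hI αt hαt) hrel) (htan αt hαt)
  refine ⟨sub_self _, fun α hα => ?_, ?_, hQ''.differentiableAt, ?_⟩
  · rw [(hQ' α hα).deriv, (hΦd _).hasFDerivAt.hasDerivAt_prodMk_left.deriv,
      (hΦd _).hasFDerivAt.hasDerivAt_prodMk_left.deriv]
  · rw [(hQ' αt hαt).deriv, sub_self]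
  · rw [hQ''.deriv, (hΦ.contDiffAt.isSymmSndFDerivAt (by simp)).fderiv_fderiv_inr_sub,
      iteratedFDeriv_comp_prodMk_const hΦ, ContinuousMultilinearMap.compContinuousLinearMap_apply,
      iteratedFDeriv_two_apply, iteratedFDeriv_two_apply]
    simp only [Matrix.cons_val_zero, Matrix.cons_val_one, inl_apply]
    rw [← hmixed]
    field_simp [hνne αt hαt]

/-- Derivatives of `Q(α) = Φ(x̃, α) − Φ(x(α), α)` along the tangency curve:
if `H(x(α)) = 0` and `∇H(x(α)) = ν(α) ∇ₓΦ(x(α), α)` on an open interval `I`,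
then `Q(α̃) = 0`, `Q′(α) = ∂_αΦ(x̃,α) − ∂_αΦ(x(α),α)` (so `Q′(α̃) = 0`), and
`Q″(α̃) = ∇ₓ²Φ(x̃,α̃)(x′,x′) − (1/ν(α̃)) ∇²H(x̃)(x′,x′)` with `x′ = x′(α̃)`. -/
theorem stmt_6 (I : Set ℝ) (hIopen : IsOpen I) (hIconn : I.OrdConnected)
    (αt : ℝ) (hαt : αt ∈ I)
    (H : EuclideanSpace ℝ (Fin 2) → ℝ)
    (Φ : EuclideanSpace ℝ (Fin 2) × ℝ → ℝ)
    (hH : ContDiff ℝ 2 H) (hΦ : ContDiff ℝ 2 Φ)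
    (x : ℝ → EuclideanSpace ℝ (Fin 2)) (ν : ℝ → ℝ)
    (hx : ContDiffOn ℝ 1 x I) (hν : ContDiffOn ℝ 1 ν I)
    (hνne : ∀ α ∈ I, ν α ≠ 0)
    (hH0 : ∀ α ∈ I, H (x α) = 0)
    (hgrad : ∀ α ∈ I, gradient H (x α) = ν α • gradient (fun z => Φ (z, α)) (x α)) :
    (Φ (x αt, αt) - Φ (x αt, αt) = 0) ∧
    (∀ α ∈ I, deriv (fun β => Φ (x αt, β) - Φ (x β, β)) α
        = deriv (fun β => Φ (x αt, β)) α - deriv (fun β => Φ (x α, β)) α) ∧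
    (deriv (fun β => Φ (x αt, β) - Φ (x β, β)) αt = 0) ∧
    DifferentiableAt ℝ (deriv (fun β => Φ (x αt, β) - Φ (x β, β))) αt ∧
    deriv (deriv (fun β => Φ (x αt, β) - Φ (x β, β))) αt
      = iteratedFDeriv ℝ 2 (fun z => Φ (z, αt)) (x αt) ![deriv x αt, deriv x αt]
        - (1 / ν αt) * iteratedFDeriv ℝ 2 H (x αt) ![deriv x αt, deriv x αt] :=
  stmt_6_general I hIopen αt hαt H Φ hH hΦ x ν hx hν hνne hH0 hgrad
end

section
/- Let n ≥ 1, s ∈ (0,1), and L, L′ > 0. Let g : ℝⁿ → ℝ have compact support and satisfy |g(x) − g(y)| ≤ L|x − y|^s for all x, y. Let φ : ℝⁿ → ℝ have compact support, satisfy |φ(x) − φ(y)| ≤ L′|x − y|^s for all x, y, and satisfy ∑_{j∈ℤⁿ} φ(u − j) = 1 for all u ∈ ℝⁿ. For ε > 0, define the interpolant g_ε(y) := ∑_{j∈ℤⁿ} φ(y/ε − j) g(εj). Then there exists C > 0 (depending only on g, φ, s, n) such that for every ε ∈ (0,1]: (i) |g_ε(y) − g(y)| ≤ C ε^s for all y ∈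 ℝⁿ; (ii) |g_ε(y + h) − g_ε(y)| ≤ C |h|^s for all y, h ∈ ℝⁿ; (iii) ‖g_ε‖_∞ ≤ C. -/
/-- The point of the integer lattice `ℤⁿ` viewed inside `ℝⁿ`. -/
noncomputable def latticePt (n : ℕ) (j : Fin n → ℤ) : EuclideanSpace ℝ (Fin n) :=
  WithLp.toLp 2 (fun i => (j i : ℝ))

/-- The interpolant of `g` with kernel `φ` at grid step `ε`:
`g_ε(y) = ∑_{j ∈ ℤⁿ} φ(y/ε − j) g(εj)`. -/
noncomputable def interpolant (n : ℕ) (φ g : EuclideanSpace ℝ (Fin n) → ℝ) (ε : ℝ)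
    (y : EuclideanSpace ℝ (Fin n)) : ℝ :=
  ∑' j : Fin n → ℤ, φ (ε⁻¹ • y - latticePt n j) * g (ε • latticePt n j)

/-!
Because `φ` reproduces constants, `g_ε(y) - c = ∑ⱼ φ(y/ε - j) (g(εj) - c)` for every constant `c`,
and since `supp φ ⊆ B(0, R)` only the lattice points `j` with `‖y/ε - j‖ ≤ R` contribute; there are
boundedly many of them, uniformly in `y`. Taking `c = g(y)` makes every term `O(ε^s)`, which gives
(i), and (iii) follows. For (ii) with `‖h‖ ≤ ε`, subtracting the expansions of `g_ε(y + h)` and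
`g_ε(y)` with the same `c = g(y)` pairs a kernel difference `O((‖h‖/ε)^s)` with a data difference
`O(ε^s)`; for `‖h‖ > ε`, (i) twice and the Hölder bound on `g` suffice.
-/

open Filter Topology

theorem continuous_of_abs_sub_le_mul_rpow {E : Type*} [SeminormedAddCommGroup E] {f : E → ℝ}
    {L s : ℝ} (hs : 0 < s) (hf : ∀ x y, |f x - f y| ≤ L * ‖x - y‖ ^ s) : Continuous f := by
  refine continuous_iff_continuousAt.2 fun x => tendsto_iff_norm_sub_tendsto_zero.2 ?_
  have hlim : Tendsto (fun y => L * ‖y - x‖ ^ s) (𝓝 x) (𝓝 0) := by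
    simpa [Real.zero_rpow hs.ne'] using
      ((tendsto_norm_sub_self x).rpow_const (Or.inr hs.le)).const_mul L
  exact squeeze_zero (fun _ => norm_nonneg _) (fun y => hf y x) hlim

theorem abs_tsum_le_card_mul {ι : Type*} {f : ι → ℝ} {S : Finset ι} {B : ℝ} (hB : 0 ≤ B)
    (hf : ∀ j, f j ≠ 0 → j ∈ S ∧ |f j| ≤ B) : |∑' j, f j| ≤ S.card * B := by
  have hS : ∀ j ∉ S, f j = 0 := fun j hj => by_contra fun h => hj (hf j h).1
  rw [tsum_eq_sum hS, ← nsmul_eq_mul]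
  refine (Finset.abs_sum_le_sum_abs f S).trans (Finset.sum_le_card_nsmul _ _ _ fun j _ => ?_)
  by_cases h : f j = 0
  · simpa [h] using hB
  · exact (hf j h).2

theorem abs_sub_le_two_mul_add_of_forall_abs_sub_le {X : Type*} {F f : X → ℝ} {A : ℝ}
    (hF : ∀ x, |F x - f x| ≤ A) (x y : X) : |F x - F y| ≤ 2 * A + |f x - f y| := by
  have hx := abs_le.1 (hF x)
  have hy := abs_le.1 (hF y)
  have hxy := le_abs_self (f x - f y)
  have hyx := neg_abs_le (f x - f y)
  rw [abs_le]
  constructor <;> linarith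

noncomputable def latticeBox (n : ℕ) (R : ℝ) (u : EuclideanSpace ℝ (Fin n)) :
    Finset (Fin n → ℤ) :=
  Finset.Icc (fun i => ⌊u i⌋ - ⌈R⌉) (fun i => ⌊u i⌋ + ⌈R⌉)

theorem card_latticeBox (n : ℕ) (R : ℝ) (u : EuclideanSpace ℝ (Fin n)) :
    (latticeBox n R u).card = (2 * ⌈R⌉ + 1).toNat ^ n := by
  have hside : ∀ i, ⌊u i⌋ + ⌈R⌉ + 1 - (⌊u i⌋ - ⌈R⌉) = 2 * ⌈R⌉ + 1 := fun i => by ring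
  simp only [latticeBox, Pi.card_Icc, Int.card_Icc, hside, Finset.prod_const, Finset.card_univ,
    Fintype.card_fin]

theorem mem_latticeBox_of_norm_sub_le {n : ℕ} {R : ℝ} {u : EuclideanSpace ℝ (Fin n)}
    {j : Fin n → ℤ} (h : ‖u - latticePt n j‖ ≤ R) : j ∈ latticeBox n R u := by
  have hco : ∀ i, |u i - j i| ≤ R := fun i =>
    (PiLp.norm_apply_le (u - latticePt n j) i).trans h
  simp only [latticeBox, Finset.mem_Icc, Pi.le_def]
  refine ⟨fun i => ?_, fun i => ?_⟩ <;> obtain ⟨hlo, hhi⟩ := abs_le.1 (hco i)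
  · have : ((⌊u i⌋ - ⌈R⌉ : ℤ) : ℝ) ≤ j i := by
      push_cast; linarith [Int.floor_le (u i), Int.le_ceil R]
    exact_mod_cast this
  · have : (j i : ℝ) < ((⌊u i⌋ + ⌈R⌉ + 1 : ℤ) : ℝ) := by
      push_cast; linarith [Int.lt_floor_add_one (u i), Int.le_ceil R]
    exact Int.lt_add_one_iff.1 (by exact_mod_cast this)

section Interpolant

variable {n : ℕ} {φ g : EuclideanSpace ℝ (Fin n) → ℝ} {R : ℝ}

theorem summable_kernel_mul (hφR : ∀ x, φ x ≠ 0 → ‖x‖ ≤ R) (u : EuclideanSpace ℝ (Fin n))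
    (c : (Fin n → ℤ) → ℝ) : Summable fun j => φ (u - latticePt n j) * c j :=
  summable_of_ne_finset_zero (s := latticeBox n R u) fun j hj => by
    by_contra h
    exact hj (mem_latticeBox_of_norm_sub_le (hφR _ (left_ne_zero_of_mul h)))

theorem interpolant_sub_eq_tsum (hφR : ∀ x, φ x ≠ 0 → ‖x‖ ≤ R)
    (hφ_sum : ∀ u, ∑' j : Fin n → ℤ, φ (u - latticePt n j) = 1)
    (ε : ℝ) (y : EuclideanSpace ℝ (Fin n)) (c : ℝ) :
    interpolant n φ g ε y - c
      = ∑' j, φ (ε⁻¹ • y - latticePt n j) * (g (ε • latticePt n j) - c) := by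
  simp_rw [mul_sub]
  rw [(summable_kernel_mul hφR _ _).tsum_sub (summable_kernel_mul hφR _ fun _ => c),
    tsum_mul_right, hφ_sum, one_mul, interpolant]

theorem norm_smul_latticePt_sub_le {ε : ℝ} (hε : 0 < ε) {y : EuclideanSpace ℝ (Fin n)}
    {j : Fin n → ℤ} {r : ℝ} (h : ‖ε⁻¹ • y - latticePt n j‖ ≤ r) :
    ‖ε • latticePt n j - y‖ ≤ ε * r := by
  have hscale : ε • latticePt n j - y = -(ε • (ε⁻¹ • y - latticePt n j)) := by
    rw [smul_sub, smul_inv_smul₀ hε.ne']; abel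
  rw [hscale, norm_neg, norm_smul, Real.norm_of_nonneg hε.le]
  exact mul_le_mul_of_nonneg_left h hε.le

variable {s L L' M ε : ℝ}

theorem abs_interpolant_sub_le (hR : 0 ≤ R) (hφR : ∀ x, φ x ≠ 0 → ‖x‖ ≤ R)
    (hφ_sum : ∀ u, ∑' j : Fin n → ℤ, φ (u - latticePt n j) = 1) (hφM : ∀ x, |φ x| ≤ M)
    (hs : 0 ≤ s) (hL : 0 ≤ L) (hg_hold : ∀ x y, |g x - g y| ≤ L * ‖x - y‖ ^ s)
    (hε : 0 < ε) (y : EuclideanSpace ℝ (Fin n)) :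
    |interpolant n φ g ε y - g y| ≤ (2 * ⌈R⌉ + 1).toNat ^ n * (M * (L * R ^ s)) * ε ^ s := by
  have hM : 0 ≤ M := (abs_nonneg _).trans (hφM 0)
  rw [interpolant_sub_eq_tsum hφR hφ_sum, mul_assoc, ← Nat.cast_pow,
    ← card_latticeBox n R (ε⁻¹ • y)]
  refine abs_tsum_le_card_mul (by positivity) fun j hj => ?_
  have hnear := hφR _ (left_ne_zero_of_mul hj)
  refine ⟨mem_latticeBox_of_norm_sub_le hnear, ?_⟩
  calc |φ (ε⁻¹ • y - latticePt n j) * (g (ε • latticePt n j) - g y)|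
      ≤ M * (L * ‖ε • latticePt n j - y‖ ^ s) := by
        rw [abs_mul]; exact mul_le_mul (hφM _) (hg_hold _ _) (abs_nonneg _) hM
    _ ≤ M * (L * (ε * R) ^ s) := by
        gcongr; exact norm_smul_latticePt_sub_le hε hnear
    _ = M * (L * R ^ s) * ε ^ s := by rw [Real.mul_rpow hε.le hR]; ring

theorem abs_interpolant_add_sub_le (hR : 0 ≤ R) (hφR : ∀ x, φ x ≠ 0 → ‖x‖ ≤ R)
    (hφ_sum : ∀ u, ∑' j : Fin n → ℤ, φ (u - latticePt n j) = 1)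
    (hL' : 0 ≤ L') (hφ_hold : ∀ x y, |φ x - φ y| ≤ L' * ‖x - y‖ ^ s)
    (hs : 0 ≤ s) (hL : 0 ≤ L) (hg_hold : ∀ x y, |g x - g y| ≤ L * ‖x - y‖ ^ s)
    (hε : 0 < ε) (y h : EuclideanSpace ℝ (Fin n)) (hh : ‖h‖ ≤ ε) :
    |interpolant n φ g ε (y + h) - interpolant n φ g ε y|
      ≤ (2 * ⌈R + 1⌉ + 1).toNat ^ n * (L' * L * (R + 1) ^ s) * ‖h‖ ^ s := by
  set u := ε⁻¹ • y
  set u' := ε⁻¹ • (y + h)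
  have huu' : ‖u' - u‖ = ε⁻¹ * ‖h‖ := by
    rw [← smul_sub, add_sub_cancel_left, norm_smul, Real.norm_of_nonneg (by positivity)]
  have huu'_le : ‖u' - u‖ ≤ 1 := by
    rw [huu']; exact inv_mul_le_one_of_le₀ hh hε.le
  have hdiff : interpolant n φ g ε (y + h) - interpolant n φ g ε y
      = ∑' j, (φ (u' - latticePt n j) - φ (u - latticePt n j))
          * (g (ε • latticePt n j) - g y) := by
    rw [← sub_sub_sub_cancel_right _ _ (g y), interpolant_sub_eq_tsum hφR hφ_sum,
      interpolant_sub_eq_tsum hφR hφ_sum, ← (summable_kernel_mul hφR _ _).tsum_sub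
        (summable_kernel_mul hφR _ _)]
    simp_rw [sub_mul]
    rfl
  rw [hdiff, mul_assoc, ← Nat.cast_pow, ← card_latticeBox n (R + 1) u]
  refine abs_tsum_le_card_mul (by positivity) fun j hj => ?_
  have hnear : ‖u - latticePt n j‖ ≤ R + 1 := by
    rcases ne_or_eq (φ (u - latticePt n j)) 0 with h0 | h0
    · linarith [hφR _ h0]
    · have h0' : φ (u' - latticePt n j) ≠ 0 := by
        intro h1; exact hj (by rw [h0, h1, sub_zero, zero_mul])
      calc ‖u - latticePt n j‖ ≤ ‖u - u'‖ + ‖u' - latticePt n j‖ :=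
            norm_sub_le_norm_sub_add_norm_sub _ _ _
        _ ≤ R + 1 := by rw [norm_sub_rev]; linarith [hφR _ h0']
  have hφ_diff : |φ (u' - latticePt n j) - φ (u - latticePt n j)| ≤ L' * (ε⁻¹ * ‖h‖) ^ s := by
    rw [← huu', ← sub_sub_sub_cancel_right u' u (latticePt n j)]; exact hφ_hold _ _
  have hg_diff : |g (ε • latticePt n j) - g y| ≤ L * (ε * (R + 1)) ^ s :=
    (hg_hold _ _).trans (by gcongr; exact norm_smul_latticePt_sub_le hε hnear)
  refine ⟨mem_latticeBox_of_norm_sub_le hnear, ?_⟩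
  calc |(φ (u' - latticePt n j) - φ (u - latticePt n j)) * (g (ε • latticePt n j) - g y)|
      ≤ L' * (ε⁻¹ * ‖h‖) ^ s * (L * (ε * (R + 1)) ^ s) := by
        rw [abs_mul]; exact mul_le_mul hφ_diff hg_diff (abs_nonneg _) (by positivity)
    _ = L' * L * (R + 1) ^ s * ‖h‖ ^ s := by
        rw [mul_mul_mul_comm, ← Real.mul_rpow (by positivity) (by positivity),
          show ε⁻¹ * ‖h‖ * (ε * (R + 1)) = (R + 1) * ‖h‖ by field_simp,
          Real.mul_rpow (by positivity) (norm_nonneg _)]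
        ring

end Interpolant

theorem stmt_7_general (n : ℕ) (s L L' : ℝ) (hs : s ∈ Set.Ioo (0:ℝ) 1)
    (hL : 0 < L) (hL' : 0 < L')
    (g φ : EuclideanSpace ℝ (Fin n) → ℝ)
    (hg_supp : HasCompactSupport g)
    (hφ_supp : HasCompactSupport φ)
    (hg_hold : ∀ x y, |g x - g y| ≤ L * ‖x - y‖ ^ s)
    (hφ_hold : ∀ x y, |φ x - φ y| ≤ L' * ‖x - y‖ ^ s)
    (hφ_sum : ∀ u : EuclideanSpace ℝ (Fin n), ∑' j : Fin n → ℤ, φ (u - latticePt n j) = 1) :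
    ∃ C > 0, ∀ ε ∈ Set.Ioc (0:ℝ) 1,
      (∀ y, |interpolant n φ g ε y - g y| ≤ C * ε ^ s) ∧
      (∀ y h, |interpolant n φ g ε (y + h) - interpolant n φ g ε y| ≤ C * ‖h‖ ^ s) ∧
      (∀ y, |interpolant n φ g ε y| ≤ C) := by
  obtain ⟨R, hR, hφ_ball⟩ := hφ_supp.isBounded.subset_closedBall_lt 0 0
  have hφR : ∀ x, φ x ≠ 0 → ‖x‖ ≤ R := fun x hx => by
    simpa using hφ_ball (subset_tsupport φ hx)
  obtain ⟨Mφ, hMφ⟩ :=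
    (continuous_of_abs_sub_le_mul_rpow hs.1 hφ_hold).bounded_above_of_compact_support hφ_supp
  obtain ⟨Mg, hMg⟩ :=
    (continuous_of_abs_sub_le_mul_rpow hs.1 hg_hold).bounded_above_of_compact_support hg_supp
  have hMφ0 : 0 ≤ Mφ := (norm_nonneg _).trans (hMφ 0)
  have hMg0 : 0 ≤ Mg := (norm_nonneg _).trans (hMg 0)
  set C₁ : ℝ := (2 * ⌈R⌉ + 1).toNat ^ n * (Mφ * (L * R ^ s))
  set C₂ : ℝ := (2 * ⌈R + 1⌉ + 1).toNat ^ n * (L' * L * (R + 1) ^ s)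
  have hC₁ : 0 ≤ C₁ := by positivity
  have hC₂ : 0 ≤ C₂ := by positivity
  have happrox : ∀ ε > 0, ∀ y, |interpolant n φ g ε y - g y| ≤ C₁ * ε ^ s := fun ε hε =>
    abs_interpolant_sub_le hR.le hφR hφ_sum hMφ hs.1.le hL.le hg_hold hε
  refine ⟨2 * C₁ + C₂ + L + Mg, by positivity, fun ε ⟨hε, hε1⟩ =>
    ⟨fun y => ?_, fun y h => ?_, fun y => ?_⟩⟩
  · exact (happrox ε hε y).trans (by gcongr; linarith)
  · rcases le_or_gt ‖h‖ ε with hh | hh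
    · exact (abs_interpolant_add_sub_le hR.le hφR hφ_sum hL'.le hφ_hold hs.1.le hL.le hg_hold
        hε y h hh).trans (by gcongr; linarith)
    · have hεh : ε ^ s ≤ ‖h‖ ^ s := Real.rpow_le_rpow hε.le hh.le hs.1.le
      calc |interpolant n φ g ε (y + h) - interpolant n φ g ε y|
          ≤ 2 * (C₁ * ε ^ s) + |g (y + h) - g y| :=
            abs_sub_le_two_mul_add_of_forall_abs_sub_le (happrox ε hε) _ _
        _ ≤ 2 * (C₁ * ‖h‖ ^ s) + L * ‖h‖ ^ s := by
            gcongr; simpa using hg_hold (y + h) y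
        _ ≤ (2 * C₁ + C₂ + L + Mg) * ‖h‖ ^ s := by
            have := Real.rpow_nonneg (norm_nonneg h) s
            nlinarith
  · have hεs : ε ^ s ≤ 1 := Real.rpow_le_one hε.le hε1 hs.1.le
    calc |interpolant n φ g ε y| ≤ |interpolant n φ g ε y - g y| + |g y| :=
          norm_le_norm_sub_add (interpolant n φ g ε y) (g y)
      _ ≤ C₁ * 1 + Mg := add_le_add ((happrox ε hε y).trans (by gcongr)) (hMg y)
      _ ≤ 2 * C₁ + C₂ + L + Mg := by linarith

/-- Uniform Hölder regularity and approximation property of grid interpolation of a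
compactly supported Hölder function with a compactly supported Hölder kernel forming
a partition of unity. -/
theorem stmt_7 (n : ℕ) (hn : 1 ≤ n) (s L L' : ℝ) (hs : s ∈ Set.Ioo (0:ℝ) 1)
    (hL : 0 < L) (hL' : 0 < L')
    (g φ : EuclideanSpace ℝ (Fin n) → ℝ)
    (hg_supp : HasCompactSupport g)
    (hφ_supp : HasCompactSupport φ)
    (hg_hold : ∀ x y, |g x - g y| ≤ L * ‖x - y‖ ^ s)
    (hφ_hold : ∀ x y, |φ x - φ y| ≤ L' * ‖x - y‖ ^ s)
    (hφ_sum : ∀ u : EuclideanSpace ℝ (Fin n), ∑' j : Fin n → ℤ, φ (u - latticePt n j) = 1) :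
    ∃ C > 0, ∀ ε ∈ Set.Ioc (0:ℝ) 1,
      (∀ y, |interpolant n φ g ε y - g y| ≤ C * ε ^ s) ∧
      (∀ y h, |interpolant n φ g ε (y + h) - interpolant n φ g ε y| ≤ C * ‖h‖ ^ s) ∧
      (∀ y, |interpolant n φ g ε y| ≤ C) :=
  stmt_7_general n s L L' hs hL hL' g φ hg_supp hφ_supp hg_hold hφ_hold hφ_sum
end

section
/- Let A > 0, let f : ℝ → ℝ be twice continuously differentiable with f, f′, f″ bounded, and let φ : ℝ → ℝ be twice continuously differentiable with compact support and exact up to order one, i.e. ∑_{j∈ℤ} φ(u − j) = 1 and ∑_{j∈ℤ} j φ(u − j) = u for all u ∈ ℝ. Then there exists C > 0 such that for all ε ∈ (0,1], all t ≥ 1 with εt ≤ A, and all q ∈ ℝ with ε|q| ≤ A, the function E(t) := ∑_{j∈ℤ} φ(t + q − j) f(εj) max(j − q, 0)^{1/2} − f(ε(t + q)) t^{1/2} satisfies |E(t)| ≤ C t^{−3/2}, |E′(t)| ≤ C t^{−3/2}, and |E″(t)| ≤ C t^{−3/2}, where the derivatives are taken with respect to t. -/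
/-- The interpolation error `E(t)` of the paper's auxiliary asymptotics lemma:
`E(t) = ∑_{j∈ℤ} φ(t + q − j) f(εj) (j − q)₊^{1/2} − f(ε(t+q)) t^{1/2}`. -/
noncomputable def interpErr (φ f : ℝ → ℝ) (ε q t : ℝ) : ℝ :=
  (∑' j : ℤ, φ (t + q - (j : ℝ)) * f (ε * (j : ℝ)) * Real.sqrt (max ((j : ℝ) - q) 0))
    - f (ε * (t + q)) * Real.sqrt t

/-!
Put `u = t + q` and `h(y) = f(εy) (y − q)^{1/2}`, so that `E(t) = ∑ⱼ φ(u − j) h(j) − h(u)`.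
Differentiating the two exactness identities shows `∑ⱼ φ'(u − j) = 0`, `∑ⱼ j φ'(u − j) = 1` and
`∑ⱼ φ''(u − j) = ∑ⱼ j φ''(u − j) = 0`. Hence the first-order Taylor polynomial of `h` at `u` can
be subtracted from the samples at no cost:
`E⁽ᵏ⁾(t) = ∑ⱼ φ⁽ᵏ⁾(u − j) Tⱼ − [k = 2] h''(u)` with `Tⱼ = h(j) − h(u) − (j − u) h'(u)`,
and only the `O(1)` indices with `|j − u| ≤ R` contribute, `R` a support radius of `φ`.
For `t ≥ 2R` these `j` satisfy `t/2 ≤ j − q ≤ 2t`, where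
`|h''| ≲ ε² t^{1/2} + ε t^{−1/2} + t^{−3/2} ≲ (1 + A)² t^{−3/2}` because `εt ≤ A`, so
`|Tⱼ| ≲ R² t^{−3/2}`. For `1 ≤ t ≤ 2R` all quantities are bounded and `t^{−3/2} ≥ (2R)^{−3/2}`.
-/

open Set Filter Topology Metric

theorem Int.mem_Icc_ceil_floor_of_abs_sub_le {u r : ℝ} {j : ℤ} (h : |u - j| ≤ r) :
    j ∈ Finset.Icc ⌈u - r⌉ ⌊u + r⌋ := by
  rw [abs_le] at h
  simp only [Finset.mem_Icc, Int.ceil_le, Int.le_floor]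
  constructor <;> linarith

theorem Int.card_Icc_ceil_floor_le (u : ℝ) {r : ℝ} (hr : 0 ≤ r) :
    ((Finset.Icc ⌈u - r⌉ ⌊u + r⌋).card : ℝ) ≤ 2 * r + 1 := by
  have h : ((⌊u + r⌋ + 1 - ⌈u - r⌉ : ℤ) : ℝ) ≤ 2 * r + 1 := by
    push_cast
    linarith [Int.floor_le (u + r), Int.le_ceil (u - r)]
  rw [Int.card_Icc, ← Int.cast_natCast, Int.toNat_eq_max, Int.cast_max, Int.cast_zero]
  exact max_le h (by linarith)

theorem Real.rpow_neg_three_halves {t : ℝ} (ht : 0 < t) : t ^ (-(3 : ℝ) / 2) = (t * √t)⁻¹ := by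
  rw [show -(3 : ℝ) / 2 = -(1 + 1 / 2) by norm_num, Real.rpow_neg ht.le, Real.rpow_add ht,
    Real.rpow_one, Real.sqrt_eq_rpow]

theorem HasDerivAt.comp_const_mul {g : ℝ → ℝ} {g' ε y : ℝ} (hg : HasDerivAt g g' (ε * y)) :
    HasDerivAt (fun y => g (ε * y)) (ε * g') y := by
  simpa [mul_comm, Function.comp_def] using hg.comp y ((hasDerivAt_id y).const_mul ε)

theorem hasDerivAt_sqrt_sub {q y : ℝ} (hy : q < y) :
    HasDerivAt (fun y => √(y - q)) (1 / (2 * √(y - q))) y :=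
  ((hasDerivAt_id y).sub_const q).sqrt (sub_pos.mpr hy).ne' |>.congr_deriv (by simp)

theorem deriv_eq_zero_of_lt_abs {ψ : ℝ → ℝ} {R : ℝ} (hψ : ∀ x, R < |x| → ψ x = 0) {x : ℝ}
    (hx : R < |x|) : deriv ψ x = 0 := by
  have h : ψ =ᶠ[𝓝 x] fun _ => 0 :=
    eventually_of_mem ((isOpen_lt continuous_const continuous_abs).mem_nhds hx) hψ
  rw [h.deriv_eq, deriv_const]

theorem exists_abs_le_of_contDiff_two {φ : ℝ → ℝ} (hφ : ContDiff ℝ 2 φ)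
    (hs : HasCompactSupport φ) :
    ∃ M, ∀ x, |φ x| ≤ M ∧ |deriv φ x| ≤ M ∧ |deriv (deriv φ) x| ≤ M := by
  obtain ⟨M₀, h₀⟩ := hφ.continuous.bounded_above_of_compact_support hs
  obtain ⟨M₁, h₁⟩ := (hφ.continuous_deriv one_le_two).bounded_above_of_compact_support hs.deriv
  obtain ⟨M₂, h₂⟩ :=
    (hφ.deriv' (n := 1)).continuous_deriv_one.bounded_above_of_compact_support hs.deriv.deriv
  exact ⟨max M₀ (max M₁ M₂), fun x => ⟨le_max_of_le_left (h₀ x),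
    le_max_of_le_right (le_max_of_le_left (h₁ x)), le_max_of_le_right (le_max_of_le_right (h₂ x))⟩⟩

theorem abs_sub_sub_mul_le_of_hasDerivAt {h h' h'' : ℝ → ℝ} {u r M : ℝ}
    (hd : ∀ x ∈ closedBall u r, HasDerivAt h (h' x) x)
    (hd' : ∀ x ∈ closedBall u r, HasDerivAt h' (h'' x) x)
    (hM : ∀ x ∈ closedBall u r, |h'' x| ≤ M) {y : ℝ} (hy : y ∈ closedBall u r) :
    |h y - h u - (y - u) * h' u| ≤ M * r ^ 2 := by
  have hr : 0 ≤ r := dist_nonneg.trans hy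
  have hu : u ∈ closedBall u r := mem_closedBall_self hr
  have hM0 : 0 ≤ M := (abs_nonneg _).trans (hM u hu)
  have hlip : ∀ x ∈ closedBall u r, |h' x - h' u| ≤ M * r := fun x hx =>
    ((convex_closedBall u r).norm_image_sub_le_of_norm_hasDerivWithin_le
      (fun z hz => (hd' z hz).hasDerivWithinAt) hM hu hx).trans
      (mul_le_mul_of_nonneg_left (mem_closedBall.mp hx) hM0)
  have key := (convex_closedBall u r).norm_image_sub_le_of_norm_hasDerivWithin_le
    (f := fun x => h x - x * h' u) (f' := fun x => h' x - h' u)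
    (fun z hz => ((hd z hz).sub (hasDerivAt_mul_const (h' u))).hasDerivWithinAt) hlip hu hy
  calc |h y - h u - (y - u) * h' u| = ‖(h y - y * h' u) - (h u - u * h' u)‖ := by
        rw [Real.norm_eq_abs]; ring_nf
    _ ≤ M * r * ‖y - u‖ := key
    _ ≤ M * r ^ 2 := by
        rw [sq, ← mul_assoc]
        exact mul_le_mul_of_nonneg_left (mem_closedBall.mp hy) (mul_nonneg hM0 hr)

noncomputable def latticeSum (ψ : ℝ → ℝ) (c : ℤ → ℝ) (u : ℝ) : ℝ :=
  ∑' j : ℤ, ψ (u - j) * c j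

section LatticeSum

variable {ψ : ℝ → ℝ} {R : ℝ}

theorem latticeSum_eq_sum (hψ : ∀ x, R < |x| → ψ x = 0) (c : ℤ → ℝ) {u : ℝ} {S : Finset ℤ}
    (hS : ∀ j : ℤ, |u - j| ≤ R → j ∈ S) :
    latticeSum ψ c u = ∑ j ∈ S, ψ (u - j) * c j :=
  tsum_eq_sum fun j hj => by rw [hψ _ (not_le.mp fun h => hj (hS j h)), zero_mul]

theorem hasDerivAt_latticeSum (hψ : ∀ x, R < |x| → ψ x = 0) (hd : Differentiable ℝ ψ)
    (c : ℤ → ℝ) (u : ℝ) : HasDerivAt (latticeSum ψ c) (latticeSum (deriv ψ) c u) u := by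
  set S := Finset.Icc ⌈u - (R + 1)⌉ ⌊u + (R + 1)⌋
  have hS : ∀ v ∈ ball u 1, ∀ j : ℤ, |v - j| ≤ R → j ∈ S := fun v hv j hj =>
    Int.mem_Icc_ceil_floor_of_abs_sub_le <| by
      rw [mem_ball, Real.dist_eq] at hv
      linarith [abs_sub_le u v j, abs_sub_comm u v]
  have hsum : HasDerivAt (fun v => ∑ j ∈ S, ψ (v - j) * c j)
      (∑ j ∈ S, deriv ψ (u - j) * c j) u :=
    HasDerivAt.fun_sum fun j _ => ((hd _).hasDerivAt.comp_sub_const u j).mul_const (c j)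
  rw [latticeSum_eq_sum (fun _ => deriv_eq_zero_of_lt_abs hψ) c (hS u (mem_ball_self one_pos))]
  exact hsum.congr_of_eventuallyEq <| eventually_of_mem (ball_mem_nhds u one_pos)
    fun v hv => latticeSum_eq_sum hψ c (hS v hv)

theorem latticeSum_deriv_eq (hψ : ∀ x, R < |x| → ψ x = 0) (hd : Differentiable ℝ ψ)
    {c : ℤ → ℝ} {g : ℝ → ℝ} (hg : ∀ v, latticeSum ψ c v = g v) {u g' : ℝ}
    (hg' : HasDerivAt g g' u) : latticeSum (deriv ψ) c u = g' :=
  (hasDerivAt_latticeSum hψ hd c u).unique (funext hg ▸ hg')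

theorem abs_latticeSum_le (hψ : ∀ x, R < |x| → ψ x = 0) (hR : 0 ≤ R) {M K : ℝ}
    (hM : ∀ x, |ψ x| ≤ M) (hK : 0 ≤ K) {c : ℤ → ℝ} {u : ℝ}
    (hc : ∀ j : ℤ, |u - j| ≤ R → |c j| ≤ K) :
    |latticeSum ψ c u| ≤ (2 * R + 1) * M * K := by
  set S := Finset.Icc ⌈u - R⌉ ⌊u + R⌋
  have hM0 : 0 ≤ M := (abs_nonneg _).trans (hM 0)
  have hterm : ∀ j ∈ S, |ψ (u - j) * c j| ≤ M * K := fun j hj => by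
    have hj : |u - j| ≤ R := by
      rw [Finset.mem_Icc, Int.ceil_le, Int.le_floor] at hj
      rw [abs_le]; constructor <;> linarith
    rw [abs_mul]
    exact mul_le_mul (hM _) (hc j hj) (abs_nonneg _) hM0
  rw [latticeSum_eq_sum hψ c fun j => Int.mem_Icc_ceil_floor_of_abs_sub_le]
  calc |∑ j ∈ S, ψ (u - j) * c j| ≤ ∑ j ∈ S, |ψ (u - j) * c j| := Finset.abs_sum_le_sum_abs _ _
    _ ≤ S.card * (M * K) := by simpa using Finset.sum_le_card_nsmul _ _ _ hterm
    _ ≤ (2 * R + 1) * M * K := by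
      rw [mul_assoc]
      exact mul_le_mul_of_nonneg_right (Int.card_Icc_ceil_floor_le u hR) (mul_nonneg hM0 hK)

theorem latticeSum_eq_remainder_add_moments (hψ : ∀ x, R < |x| → ψ x = 0) (c : ℤ → ℝ)
    (u a b : ℝ) :
    latticeSum ψ c u = latticeSum ψ (fun j => c j - a - (j - u) * b) u
      + latticeSum ψ 1 u * a + (latticeSum ψ (↑) u - u * latticeSum ψ 1 u) * b := by
  simp only [latticeSum_eq_sum hψ _ fun j => Int.mem_Icc_ceil_floor_of_abs_sub_le, Finset.sum_mul,
    Finset.mul_sum, ← Finset.sum_sub_distrib, ← Finset.sum_add_distrib, Pi.one_apply]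
  exact Finset.sum_congr rfl fun j _ => by ring

theorem latticeSum_deriv_moments (hψ : ∀ x, R < |x| → ψ x = 0) (hψ2 : ContDiff ℝ 2 ψ)
    (hsum : ∀ u, latticeSum ψ 1 u = 1) (hlin : ∀ u, latticeSum ψ (↑) u = u) (u : ℝ) :
    latticeSum (deriv ψ) 1 u = 0 ∧ latticeSum (deriv ψ) (↑) u = 1 ∧
      latticeSum (deriv (deriv ψ)) 1 u = 0 ∧ latticeSum (deriv (deriv ψ)) (↑) u = 0 := by
  have hd : Differentiable ℝ ψ := hψ2.differentiable two_ne_zero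
  have hψ' : ∀ x, R < |x| → deriv ψ x = 0 := fun _ => deriv_eq_zero_of_lt_abs hψ
  have m0 : ∀ v, latticeSum (deriv ψ) 1 v = 0 :=
    fun v => latticeSum_deriv_eq hψ hd hsum (hasDerivAt_const v 1)
  have m1 : ∀ v, latticeSum (deriv ψ) (↑) v = 1 :=
    fun v => latticeSum_deriv_eq hψ hd hlin (hasDerivAt_id v)
  exact ⟨m0 u, m1 u, latticeSum_deriv_eq hψ' hψ2.differentiable_deriv_two m0 (hasDerivAt_const u 0),
    latticeSum_deriv_eq hψ' hψ2.differentiable_deriv_two m1 (hasDerivAt_const u 1)⟩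

variable {g g' g'' : ℝ → ℝ} {q : ℝ}

theorem deriv_latticeSum_sub_eventuallyEq (hψ : ∀ x, R < |x| → ψ x = 0)
    (hd : Differentiable ℝ ψ) (hg : ∀ v, q < v → HasDerivAt g (g' v) v) {u : ℝ} (hu : q < u) :
    deriv (fun v => latticeSum ψ (fun j => g j) v - g v)
      =ᶠ[𝓝 u] fun v => latticeSum (deriv ψ) (fun j => g j) v - g' v :=
  eventually_of_mem (Ioi_mem_nhds hu) fun v hv =>
    ((hasDerivAt_latticeSum hψ hd _ v).sub (hg v hv)).deriv

theorem hasDerivAt_deriv_latticeSum_sub (hψ : ∀ x, R < |x| → ψ x = 0)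
    (hd : Differentiable ℝ ψ) (hd' : Differentiable ℝ (deriv ψ))
    (hg : ∀ v, q < v → HasDerivAt g (g' v) v) (hg' : ∀ v, q < v → HasDerivAt g' (g'' v) v)
    {u : ℝ} (hu : q < u) :
    HasDerivAt (deriv (fun v => latticeSum ψ (fun j => g j) v - g v))
      (latticeSum (deriv (deriv ψ)) (fun j => g j) u - g'' u) u :=
  ((hasDerivAt_latticeSum (fun _ => deriv_eq_zero_of_lt_abs hψ) hd' _ u).sub
    (hg' u hu)).congr_of_eventuallyEq (deriv_latticeSum_sub_eventuallyEq hψ hd hg hu)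

end LatticeSum

-- `Real.sqrt` vanishes on negative reals, so this is `f(εy) (y − q)₊^{1/2}`.
noncomputable def sqrtProfile (f : ℝ → ℝ) (ε q y : ℝ) : ℝ := f (ε * y) * √(y - q)

noncomputable def sqrtProfileDeriv (f : ℝ → ℝ) (ε q y : ℝ) : ℝ :=
  ε * deriv f (ε * y) * √(y - q) + f (ε * y) / (2 * √(y - q))

noncomputable def sqrtProfileDeriv2 (f : ℝ → ℝ) (ε q y : ℝ) : ℝ :=
  ε ^ 2 * deriv (deriv f) (ε * y) * √(y - q) + ε * deriv f (ε * y) / √(y - q)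
    - f (ε * y) / (4 * (y - q) * √(y - q))

noncomputable def sqrtProfileRem (f : ℝ → ℝ) (ε q u y : ℝ) : ℝ :=
  sqrtProfile f ε q y - sqrtProfile f ε q u - (y - u) * sqrtProfileDeriv f ε q u

section SqrtProfile

variable {f : ℝ → ℝ} {ε q y : ℝ}

theorem hasDerivAt_sqrtProfile (hf : Differentiable ℝ f) (hy : q < y) :
    HasDerivAt (sqrtProfile f ε q) (sqrtProfileDeriv f ε q y) y := by
  refine (((hf (ε * y)).hasDerivAt.comp_const_mul).mul (hasDerivAt_sqrt_sub hy)).congr_deriv ?_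
  rw [sqrtProfileDeriv]; ring

theorem hasDerivAt_sqrtProfileDeriv (hf : Differentiable ℝ f) (hf' : Differentiable ℝ (deriv f))
    (hy : q < y) : HasDerivAt (sqrtProfileDeriv f ε q) (sqrtProfileDeriv2 f ε q y) y := by
  have hyq : y - q ≠ 0 := (sub_pos.mpr hy).ne'
  have hs : 0 < √(y - q) := Real.sqrt_pos.mpr (sub_pos.mpr hy)
  have hss : √(y - q) ^ 2 = y - q := Real.sq_sqrt (sub_pos.mpr hy).le
  have hF := (hf (ε * y)).hasDerivAt.comp_const_mul
  have hF' := (hf' (ε * y)).hasDerivAt.comp_const_mul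
  have hS := hasDerivAt_sqrt_sub hy
  refine (((hF'.const_mul ε).mul hS).add (hF.div (hS.const_mul 2) (by positivity))).congr_deriv ?_
  rw [sqrtProfileDeriv2]
  field_simp
  rw [hss]
  ring

variable {A B t : ℝ}

theorem abs_sqrtProfileDeriv2_le
    (hfb : ∀ x, |f x| ≤ B ∧ |deriv f x| ≤ B ∧ |deriv (deriv f) x| ≤ B)
    (hε : 0 < ε) (ht : 0 < t) (hεt : ε * t ≤ A)
    (hy : t / 2 ≤ y - q) (hy' : y - q ≤ 2 * t) :
    |sqrtProfileDeriv2 f ε q y| ≤ (2 * A ^ 2 + 2 * A + 1) * B / (t * √t) := by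
  obtain ⟨h0, h1, h2⟩ := hfb (ε * y)
  set s := y - q
  have hs : 0 < s := by linarith
  have hσ : 0 < √s := Real.sqrt_pos.mpr hs
  have hτ : 0 < √t := Real.sqrt_pos.mpr ht
  have hσσ : √s ^ 2 = s := Real.sq_sqrt hs.le
  have hττ : √t ^ 2 = t := Real.sq_sqrt ht.le
  have hτσ : √t ≤ 2 * √s := by nlinarith
  have hστ : √s ≤ 2 * √t := by nlinarith
  have hεt0 : 0 ≤ ε * t := by positivity
  have hB : 0 ≤ B := (abs_nonneg _).trans h0
  have e1 : |ε ^ 2 * deriv (deriv f) (ε * y) * √s| * (t * √t) ≤ 2 * A ^ 2 * B := by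
    rw [abs_mul, abs_mul, abs_of_pos hσ, abs_of_nonneg (sq_nonneg ε)]
    calc ε ^ 2 * |deriv (deriv f) (ε * y)| * √s * (t * √t)
        ≤ ε ^ 2 * B * (2 * √t) * (t * √t) := by gcongr
      _ = 2 * (ε * t) ^ 2 * B := by linear_combination (2 * ε ^ 2 * B * t) * hττ
      _ ≤ 2 * A ^ 2 * B := by gcongr
  have e2 : |ε * deriv f (ε * y) / √s| * (t * √t) ≤ 2 * A * B := by
    rw [abs_div, abs_mul, abs_of_pos hσ, abs_of_pos hε]
    calc ε * |deriv f (ε * y)| / √s * (t * √t) ≤ ε * B / √s * (t * (2 * √s)) := by gcongr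
      _ = 2 * (ε * t) * B := by field_simp
      _ ≤ 2 * A * B := by gcongr
  have e3 : |f (ε * y) / (4 * s * √s)| * (t * √t) ≤ B := by
    rw [abs_div, abs_of_pos (by positivity : 0 < 4 * s * √s)]
    calc |f (ε * y)| / (4 * s * √s) * (t * √t) ≤ B / (4 * s * √s) * ((2 * s) * (2 * √s)) := by
          gcongr; linarith
      _ = B := by field_simp; ring
  rw [le_div_iff₀ (by positivity), sqrtProfileDeriv2]
  calc _ ≤ (|ε ^ 2 * deriv (deriv f) (ε * y) * √s| + |ε * deriv f (ε * y) / √s|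
        + |f (ε * y) / (4 * s * √s)|) * (t * √t) := by
        gcongr; exact (abs_sub _ _).trans (by gcongr; exact abs_add_le _ _)
    _ ≤ (2 * A ^ 2 + 2 * A + 1) * B := by linarith

theorem abs_sqrtProfileRem_le_of_two_mul_le {R : ℝ} (hf : Differentiable ℝ f)
    (hf' : Differentiable ℝ (deriv f))
    (hfb : ∀ x, |f x| ≤ B ∧ |deriv f x| ≤ B ∧ |deriv (deriv f) x| ≤ B)
    (hε : 0 < ε) (ht : 0 < t) (hεt : ε * t ≤ A) (hRt : 2 * R ≤ t) (hy : |y - (t + q)| ≤ R) :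
    |sqrtProfileRem f ε q (t + q) y| ≤ (2 * A ^ 2 + 2 * A + 1) * B / (t * √t) * R ^ 2 := by
  have hball : ∀ x ∈ closedBall (t + q) R, t / 2 ≤ x - q ∧ x - q ≤ 2 * t := fun x hx => by
    rw [mem_closedBall, Real.dist_eq, abs_le] at hx
    constructor <;> linarith
  exact abs_sub_sub_mul_le_of_hasDerivAt
    (fun x hx => hasDerivAt_sqrtProfile hf (by linarith [hball x hx]))
    (fun x hx => hasDerivAt_sqrtProfileDeriv hf hf' (by linarith [hball x hx]))
    (fun x hx => abs_sqrtProfileDeriv2_le hfb hε ht hεt (hball x hx).1 (hball x hx).2)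
    (by rwa [mem_closedBall, Real.dist_eq])

theorem abs_sqrtProfileRem_le_of_le_two_mul {R : ℝ}
    (hfb : ∀ x, |f x| ≤ B ∧ |deriv f x| ≤ B ∧ |deriv (deriv f) x| ≤ B)
    (hε : ε ∈ Ioc 0 1) (ht : 1 ≤ t) (hRt : t ≤ 2 * R) (hy : |y - (t + q)| ≤ R) :
    |sqrtProfileRem f ε q (t + q) y| ≤ (2 * R + 6) * R * B := by
  obtain ⟨h0, h1, -⟩ := hfb (ε * (t + q))
  have hB : 0 ≤ B := (abs_nonneg _).trans h0
  have hτ : 1 ≤ √t := Real.one_le_sqrt.mpr ht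
  have hτt : √t ≤ t := Real.sqrt_le_self_iff.mpr (Or.inr ht)
  have hR : 0 ≤ R := by linarith
  have hy' := abs_le.mp hy
  have ey : |sqrtProfile f ε q y| ≤ 3 * R * B := by
    have hsq : √(y - q) ≤ 3 * R :=
      (Real.sqrt_le_sqrt (by linarith [hy'.2] : y - q ≤ t + R)).trans
        ((Real.sqrt_le_self_iff.mpr (Or.inr (by linarith))).trans (by linarith))
    rw [sqrtProfile, abs_mul, abs_of_nonneg (Real.sqrt_nonneg _), mul_comm]
    exact mul_le_mul hsq (hfb _).1 (abs_nonneg _) (by linarith)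
  have eu : |sqrtProfile f ε q (t + q)| ≤ 2 * R * B := by
    rw [sqrtProfile, add_sub_cancel_right, abs_mul, abs_of_nonneg (Real.sqrt_nonneg _), mul_comm]
    exact mul_le_mul (by linarith) h0 (abs_nonneg _) (by linarith)
  have eu' : |sqrtProfileDeriv f ε q (t + q)| ≤ (2 * R + 1) * B := by
    rw [sqrtProfileDeriv, add_sub_cancel_right]
    have e1 : |ε * deriv f (ε * (t + q)) * √t| ≤ 1 * B * (2 * R) := by
      rw [abs_mul, abs_mul, abs_of_pos hε.1, abs_of_nonneg (Real.sqrt_nonneg _)]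
      exact mul_le_mul (mul_le_mul hε.2 h1 (abs_nonneg _) zero_le_one) (by linarith)
        (Real.sqrt_nonneg _) (by linarith)
    have e2 : |f (ε * (t + q)) / (2 * √t)| ≤ B := by
      rw [abs_div, abs_of_pos (by positivity : (0 : ℝ) < 2 * √t)]
      exact (div_le_self (abs_nonneg _) (by linarith)).trans h0
    linarith [abs_add_le (ε * deriv f (ε * (t + q)) * √t) (f (ε * (t + q)) / (2 * √t))]
  calc |sqrtProfileRem f ε q (t + q) y|
      ≤ |sqrtProfile f ε q y| + |sqrtProfile f ε q (t + q)|
        + |y - (t + q)| * |sqrtProfileDeriv f ε q (t + q)| := by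
        rw [sqrtProfileRem, ← abs_mul]
        exact (abs_sub _ _).trans (by gcongr; exact abs_sub _ _)
    _ ≤ 3 * R * B + 2 * R * B + R * ((2 * R + 1) * B) := by gcongr
    _ = (2 * R + 6) * R * B := by ring

theorem exists_abs_sqrtProfileRem_le {R : ℝ} (hf : Differentiable ℝ f)
    (hf' : Differentiable ℝ (deriv f))
    (hfb : ∀ x, |f x| ≤ B ∧ |deriv f x| ≤ B ∧ |deriv (deriv f) x| ≤ B) (hR : 0 ≤ R) (A : ℝ) :
    ∃ K, 0 ≤ K ∧ ∀ ε ∈ Ioc (0 : ℝ) 1, ∀ t, 1 ≤ t → ε * t ≤ A → ∀ q y, |y - (t + q)| ≤ R →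
      |sqrtProfileRem f ε q (t + q) y| ≤ K / (t * √t) := by
  have hB : 0 ≤ B := (abs_nonneg _).trans (hfb 0).1
  have hA : 0 ≤ 2 * A ^ 2 + 2 * A + 1 := by nlinarith [sq_nonneg (2 * A + 1)]
  have hlarge : 0 ≤ (2 * A ^ 2 + 2 * A + 1) * B * R ^ 2 := by positivity
  have hsmall : 0 ≤ 4 * R ^ 2 * ((2 * R + 6) * R * B) := by positivity
  refine ⟨(2 * A ^ 2 + 2 * A + 1) * B * R ^ 2 + 4 * R ^ 2 * ((2 * R + 6) * R * B),
    add_nonneg hlarge hsmall, fun ε hε t ht hεt q y hy => ?_⟩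
  have htτ : 0 < t * √t := by positivity
  rcases le_total (2 * R) t with hRt | hRt
  · calc _ ≤ (2 * A ^ 2 + 2 * A + 1) * B / (t * √t) * R ^ 2 :=
          abs_sqrtProfileRem_le_of_two_mul_le hf hf' hfb hε.1 (by linarith) hεt hRt hy
      _ ≤ _ := by rw [div_mul_eq_mul_div]; gcongr; linarith
  · calc _ ≤ (2 * R + 6) * R * B := abs_sqrtProfileRem_le_of_le_two_mul hfb hε ht hRt hy
      _ ≤ 4 * R ^ 2 * ((2 * R + 6) * R * B) / (t * √t) := by
          have : t * √t ≤ 4 * R ^ 2 := by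
            nlinarith [Real.sqrt_le_self_iff.mpr (Or.inr ht), Real.sqrt_nonneg t]
          rw [le_div_iff₀ htτ]
          nlinarith
      _ ≤ _ := by gcongr; linarith

end SqrtProfile

theorem interpErr_eq_comp_add_const (φ f : ℝ → ℝ) (ε q : ℝ) :
    interpErr φ f ε q = fun t => (fun v => latticeSum φ (fun j => sqrtProfile f ε q j) v
      - sqrtProfile f ε q v) (t + q) := by
  have hmax : ∀ x : ℝ, √(max x 0) = √x := fun x => by
    rcases le_total x 0 with h | h
    · rw [max_eq_right h, Real.sqrt_zero, Real.sqrt_eq_zero'.mpr h]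
    · rw [max_eq_left h]
  ext t
  simp only [interpErr, latticeSum, sqrtProfile, hmax, mul_assoc, add_sub_cancel_right]

section InterpErr

variable {φ f : ℝ → ℝ} {R ε q t : ℝ}

theorem interpErr_eq_latticeSum_sqrtProfileRem
    (hφR : ∀ x, R < |x| → φ x = 0) (hφ : ContDiff ℝ 2 φ)
    (hsum : ∀ u, latticeSum φ 1 u = 1) (hlin : ∀ u, latticeSum φ (↑) u = u)
    (hf : Differentiable ℝ f) (hf' : Differentiable ℝ (deriv f)) (ht : 0 < t) :
    interpErr φ f ε q t = latticeSum φ (fun j => sqrtProfileRem f ε q (t + q) j) (t + q) ∧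
    deriv (interpErr φ f ε q) t
      = latticeSum (deriv φ) (fun j => sqrtProfileRem f ε q (t + q) j) (t + q) ∧
    deriv (deriv (interpErr φ f ε q)) t
      = latticeSum (deriv (deriv φ)) (fun j => sqrtProfileRem f ε q (t + q) j) (t + q)
        - sqrtProfileDeriv2 f ε q (t + q) := by
  have hd : Differentiable ℝ φ := hφ.differentiable two_ne_zero
  have hφR' : ∀ x, R < |x| → deriv φ x = 0 := fun _ => deriv_eq_zero_of_lt_abs hφR
  have hg : ∀ v, q < v → HasDerivAt (sqrtProfile f ε q) (sqrtProfileDeriv f ε q v) v :=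
    fun _ => hasDerivAt_sqrtProfile hf
  have hg' : ∀ v, q < v → HasDerivAt (sqrtProfileDeriv f ε q) (sqrtProfileDeriv2 f ε q v) v :=
    fun _ => hasDerivAt_sqrtProfileDeriv hf hf'
  have hu : q < t + q := by linarith
  obtain ⟨m0', m1', m0'', m1''⟩ := latticeSum_deriv_moments hφR hφ hsum hlin (t + q)
  have hrem : ∀ ψ : ℝ → ℝ, (∀ x, R < |x| → ψ x = 0) →
      latticeSum ψ (fun j => sqrtProfile f ε q j) (t + q)
        = latticeSum ψ (fun j => sqrtProfileRem f ε q (t + q) j) (t + q)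
          + latticeSum ψ 1 (t + q) * sqrtProfile f ε q (t + q)
          + (latticeSum ψ (↑) (t + q) - (t + q) * latticeSum ψ 1 (t + q))
            * sqrtProfileDeriv f ε q (t + q) :=
    fun ψ hψ => latticeSum_eq_remainder_add_moments hψ _ _ _ _
  have hE' : deriv (interpErr φ f ε q) = fun t => deriv (fun v =>
      latticeSum φ (fun j => sqrtProfile f ε q j) v - sqrtProfile f ε q v) (t + q) :=
    funext fun t => by
      rw [interpErr_eq_comp_add_const]
      exact deriv_comp_add_const (fun v => _ - sqrtProfile f ε q v) q t
  refine ⟨?_, ?_, ?_⟩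
  · simp only [interpErr_eq_comp_add_const]
    rw [hrem φ hφR, hsum, hlin]
    ring
  · simp only [hE']
    rw [(deriv_latticeSum_sub_eventuallyEq hφR hd hg hu).eq_of_nhds, hrem _ hφR', m0', m1']
    ring
  · simp only [hE']
    rw [deriv_comp_add_const, (hasDerivAt_deriv_latticeSum_sub hφR hd
      hφ.differentiable_deriv_two hg hg' hu).deriv,
      hrem _ fun _ => deriv_eq_zero_of_lt_abs hφR', m0'', m1'']
    ring

theorem abs_interpErr_le {M K A B C : ℝ} (hφR : ∀ x, R < |x| → φ x = 0) (hR : 0 ≤ R)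
    (hφ : ContDiff ℝ 2 φ) (hM : ∀ x, |φ x| ≤ M ∧ |deriv φ x| ≤ M ∧ |deriv (deriv φ) x| ≤ M)
    (hsum : ∀ u, latticeSum φ 1 u = 1) (hlin : ∀ u, latticeSum φ (↑) u = u)
    (hf : ContDiff ℝ 2 f) (hfb : ∀ x, |f x| ≤ B ∧ |deriv f x| ≤ B ∧ |deriv (deriv f) x| ≤ B)
    (hε : 0 < ε) (ht : 1 ≤ t) (hεt : ε * t ≤ A) (hK : 0 ≤ K)
    (hrem : ∀ y, |y - (t + q)| ≤ R → |sqrtProfileRem f ε q (t + q) y| ≤ K / (t * √t))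
    (hC : (2 * R + 1) * M * K + (2 * A ^ 2 + 2 * A + 1) * B ≤ C) :
    |interpErr φ f ε q t| ≤ C / (t * √t) ∧ |deriv (interpErr φ f ε q) t| ≤ C / (t * √t) ∧
      |deriv (deriv (interpErr φ f ε q)) t| ≤ C / (t * √t) := by
  have hB : 0 ≤ B := (abs_nonneg _).trans (hfb 0).1
  have hAB : 0 ≤ (2 * A ^ 2 + 2 * A + 1) * B := by nlinarith [sq_nonneg (2 * A + 1)]
  have hφR' : ∀ x, R < |x| → deriv φ x = 0 := fun _ => deriv_eq_zero_of_lt_abs hφR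
  obtain ⟨e₀, e₁, e₂⟩ := interpErr_eq_latticeSum_sqrtProfileRem (ε := ε) (q := q) hφR hφ hsum
    hlin (hf.differentiable two_ne_zero) hf.differentiable_deriv_two (by linarith : 0 < t)
  have hT : ∀ ψ : ℝ → ℝ, (∀ x, R < |x| → ψ x = 0) → (∀ x, |ψ x| ≤ M) →
      |latticeSum ψ (fun j => sqrtProfileRem f ε q (t + q) j) (t + q)|
        ≤ (2 * R + 1) * M * K / (t * √t) := fun ψ hψ hψM => by
    rw [mul_div_assoc]
    exact abs_latticeSum_le hψ hR hψM (by positivity) fun j hj => hrem j (by rwa [abs_sub_comm])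
  have h₂ : |sqrtProfileDeriv2 f ε q (t + q)| ≤ (2 * A ^ 2 + 2 * A + 1) * B / (t * √t) :=
    abs_sqrtProfileDeriv2_le hfb hε (by linarith) hεt (by linarith) (by linarith)
  have hC₁ : (2 * R + 1) * M * K ≤ C := by linarith
  refine ⟨?_, ?_, ?_⟩
  · rw [e₀]; exact (hT φ hφR fun x => (hM x).1).trans (by gcongr)
  · rw [e₁]; exact (hT _ hφR' fun x => (hM x).2.1).trans (by gcongr)
  · rw [e₂]
    refine (abs_sub _ _).trans ((add_le_add
      (hT _ (fun _ => deriv_eq_zero_of_lt_abs hφR') fun x => (hM x).2.2) h₂).trans ?_)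
    rw [← add_div]
    gcongr

end InterpErr

theorem stmt_9_general (A : ℝ) (f φ : ℝ → ℝ) (B : ℝ)
    (hf : ContDiff ℝ 2 f)
    (hfb : ∀ x : ℝ, |f x| ≤ B ∧ |deriv f x| ≤ B ∧ |deriv (deriv f) x| ≤ B)
    (hφ_smooth : ContDiff ℝ 2 φ) (hφ_supp : HasCompactSupport φ)
    (hφ_sum : ∀ u : ℝ, ∑' j : ℤ, φ (u - (j : ℝ)) = 1)
    (hφ_lin : ∀ u : ℝ, ∑' j : ℤ, (j : ℝ) * φ (u - (j : ℝ)) = u) :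
    ∃ C > 0, ∀ ε ∈ Set.Ioc (0:ℝ) 1, ∀ t : ℝ, 1 ≤ t → ε * t ≤ A →
      ∀ q : ℝ, ε * |q| ≤ A →
        |interpErr φ f ε q t| ≤ C * t ^ (-(3:ℝ)/2) ∧
        |deriv (interpErr φ f ε q) t| ≤ C * t ^ (-(3:ℝ)/2) ∧
        |deriv (deriv (interpErr φ f ε q)) t| ≤ C * t ^ (-(3:ℝ)/2) := by
  obtain ⟨R, hR, hφR⟩ := hφ_supp.exists_pos_le_norm
  obtain ⟨M, hM⟩ := exists_abs_le_of_contDiff_two hφ_smooth hφ_supp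
  obtain ⟨K, hK, hrem⟩ := exists_abs_sqrtProfileRem_le (hf.differentiable two_ne_zero)
    hf.differentiable_deriv_two hfb hR.le A
  have hM0 : 0 ≤ M := (abs_nonneg _).trans (hM 0).1
  have hB : 0 ≤ B := (abs_nonneg _).trans (hfb 0).1
  have hAB : 0 ≤ (2 * A ^ 2 + 2 * A + 1) * B := by nlinarith [sq_nonneg (2 * A + 1)]
  refine ⟨(2 * R + 1) * M * K + (2 * A ^ 2 + 2 * A + 1) * B + 1, by positivity,
    fun ε hε t ht hεt q _ => ?_⟩
  rw [Real.rpow_neg_three_halves (by linarith), ← div_eq_mul_inv]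
  exact abs_interpErr_le (fun x hx => hφR x hx.le) hR.le hφ_smooth hM
    (fun u => by simpa [latticeSum] using hφ_sum u)
    (fun u => by simpa [latticeSum, mul_comm] using hφ_lin u)
    hf hfb hε.1 ht hεt hK (hrem ε hε t ht hεt q) (by linarith)

/-- Interpolating the samples `f(εj)(j − q)₊^{1/2}` with a compactly supported `C²`
kernel exact up to order one reproduces `f(ε(t+q)) t^{1/2}` up to `O(t^{−3/2})`
errors (also for the first two `t`-derivatives), uniformly in `ε ∈ (0,1]`,
`εt ≤ A`, `ε|q| ≤ A`. -/
theorem stmt_9 (A : ℝ) (hA : 0 < A) (f φ : ℝ → ℝ) (B : ℝ)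
    (hf : ContDiff ℝ 2 f)
    (hfb : ∀ x : ℝ, |f x| ≤ B ∧ |deriv f x| ≤ B ∧ |deriv (deriv f) x| ≤ B)
    (hφ_smooth : ContDiff ℝ 2 φ) (hφ_supp : HasCompactSupport φ)
    (hφ_sum : ∀ u : ℝ, ∑' j : ℤ, φ (u - (j : ℝ)) = 1)
    (hφ_lin : ∀ u : ℝ, ∑' j : ℤ, (j : ℝ) * φ (u - (j : ℝ)) = u) :
    ∃ C > 0, ∀ ε ∈ Set.Ioc (0:ℝ) 1, ∀ t : ℝ, 1 ≤ t → ε * t ≤ A →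
      ∀ q : ℝ, ε * |q| ≤ A →
        |interpErr φ f ε q t| ≤ C * t ^ (-(3:ℝ)/2) ∧
        |deriv (interpErr φ f ε q) t| ≤ C * t ^ (-(3:ℝ)/2) ∧
        |deriv (deriv (interpErr φ f ε q)) t| ≤ C * t ^ (-(3:ℝ)/2) :=
  stmt_9_general A f φ B hf hfb hφ_smooth hφ_supp hφ_sum hφ_lin
end

section
/- There exists a constant C > 0 such that for every ε ∈ (0, 1] and every b ≥ ε, ∑_{j ∈ ℕ, (εj)²/2 ≤ b − ε} ε · (b − (εj)²/2)^{−1/2} ≤ C, where the sum runs over all nonnegative integers j with (εj)²/2 ≤ b − ε. -/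
/-!
Put `s = √(2b)` and `x = εj`, so that `b - x²/2 = (s - x)(s + x)/2 ≥ (s - x) s / 2`. When
`s - x ≥ ε`, the summand is then at most `3√2/√s · (√(s - x + ε) - √(s - x))`, a step of a
telescoping sum whose total is at most `3√2/√s · √(s + ε) ≤ 6`. The only other nonzero summand
is the one with `s - ε < x < s`, and every summand is at most `ε / √ε ≤ 1`; hence `C = 7`.
-/

open Real Finset

lemma Real.rpow_neg_one_half_eq_inv_sqrt {t : ℝ} (ht : 0 ≤ t) : t ^ (-(1:ℝ)/2) = (√t)⁻¹ := by
  rw [neg_div, Real.rpow_neg ht, ← Real.sqrt_eq_rpow]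

lemma Real.tsum_le_of_le_telescoping {f v : ℕ → ℝ} {c d : ℝ} (k : ℕ) (hf : ∀ j, 0 ≤ f j)
    (hc : 0 ≤ c) (hv : Antitone v) (hv_nonneg : ∀ j, 0 ≤ v j)
    (hfv : ∀ j ≠ k, f j ≤ c * (v j - v (j + 1))) (hfk : f k ≤ d) :
    ∑' j, f j ≤ c * v 0 + d := by
  refine Real.tsum_le_of_sum_range_le hf fun n => ?_
  have hbound : ∀ j, f j ≤ c * (v j - v (j + 1)) + if j = k then d else 0 := by
    intro j
    by_cases hj : j = k
    · subst hj
      have := mul_nonneg hc (sub_nonneg.2 (hv j.le_succ))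
      simp only [if_true]
      linarith
    · simpa [hj] using hfv j hj
  calc ∑ j ∈ range n, f j
      ≤ ∑ j ∈ range n, (c * (v j - v (j + 1)) + if j = k then d else 0) :=
        sum_le_sum fun j _ => hbound j
    _ = c * (v 0 - v n) + if k ∈ range n then d else 0 := by
        rw [sum_add_distrib, ← mul_sum, sum_range_sub', sum_ite_eq']
    _ ≤ c * v 0 + d := by
        have hd : 0 ≤ d := (hf k).trans hfk
        have := mul_nonneg hc (hv_nonneg n)
        split_ifs <;> linarith

lemma le_three_mul_sqrt_mul_sqrt_add_sub_sqrt {a ε : ℝ} (hε : 0 ≤ ε) (hεa : ε ≤ a) :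
    ε ≤ 3 * √a * (√(a + ε) - √a) := by
  have ha : 0 ≤ a := hε.trans hεa
  have hsq : √(a + ε) ^ 2 - √a ^ 2 = ε := by
    rw [sq_sqrt (by linarith), sq_sqrt ha]; ring
  have hle : √(a + ε) ≤ 2 * √a := by
    rw [show 2 * √a = √(2 ^ 2 * a) by rw [sqrt_mul (by norm_num), sqrt_sq (by norm_num)]]
    exact sqrt_le_sqrt (by linarith)
  have hmono : √a ≤ √(a + ε) := sqrt_le_sqrt (by linarith)
  nlinarith [sqrt_nonneg a]

lemma mul_rpow_neg_one_half_le_one {ε t : ℝ} (hε : 0 < ε) (hε1 : ε ≤ 1) (hεt : ε ≤ t) :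
    ε * t ^ (-(1:ℝ)/2) ≤ 1 := by
  rw [Real.rpow_neg_one_half_eq_inv_sqrt (hε.le.trans hεt), ← div_eq_mul_inv]
  calc ε / √t ≤ ε / √ε := by gcongr
    _ = √ε := div_sqrt
    _ ≤ 1 := sqrt_le_one.2 hε1

lemma div_sqrt_sq_sub_sq_le {s x ε : ℝ} (hx : 0 ≤ x) (hε : 0 < ε) (hεx : ε ≤ s - x) :
    ε / √((s ^ 2 - x ^ 2) / 2) ≤ 3 * √2 / √s * (√(s - x + ε) - √(s - x)) := by
  have ha : 0 < s - x := hε.trans_le hεx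
  have hs : 0 < s := by linarith
  have hD : 0 ≤ √(s - x + ε) - √(s - x) := sub_nonneg.2 (sqrt_le_sqrt (by linarith))
  have hε_le := le_three_mul_sqrt_mul_sqrt_add_sub_sqrt hε.le hεx
  have hts : √(s - x) * √s ≤ √2 * √((s ^ 2 - x ^ 2) / 2) := by
    rw [← sqrt_mul ha.le, ← sqrt_mul zero_le_two]
    exact sqrt_le_sqrt (by nlinarith)
  have ht : 0 < √((s ^ 2 - x ^ 2) / 2) := sqrt_pos.2 (by nlinarith)
  rw [div_mul_eq_mul_div, div_le_div_iff₀ ht (sqrt_pos.2 hs)]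
  calc ε * √s ≤ 3 * √(s - x) * (√(s - x + ε) - √(s - x)) * √s := by gcongr
    _ = 3 * (√(s - x + ε) - √(s - x)) * (√(s - x) * √s) := by ring
    _ ≤ 3 * (√(s - x + ε) - √(s - x)) * (√2 * √((s ^ 2 - x ^ 2) / 2)) := by gcongr
    _ = 3 * √2 * (√(s - x + ε) - √(s - x)) * √((s ^ 2 - x ^ 2) / 2) := by ring

/-- The `j`-th term of the Riemann sum for `∫₀^{√(2b)} (b - x²/2)^{-1/2} dx` with mesh `ε`,
restricted to the nodes where `b - x²/2 ≥ ε`. -/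
noncomputable def riemannSummand (ε b : ℝ) (j : ℕ) : ℝ :=
  if (ε * (j : ℝ)) ^ 2 / 2 ≤ b - ε then ε * (b - (ε * (j : ℝ)) ^ 2 / 2) ^ (-(1:ℝ)/2) else 0

lemma riemannSummand_nonneg {ε : ℝ} (hε : 0 < ε) (b : ℝ) (j : ℕ) : 0 ≤ riemannSummand ε b j := by
  unfold riemannSummand
  split_ifs with h
  · exact mul_nonneg hε.le (rpow_nonneg (by linarith) _)
  · rfl

lemma riemannSummand_le_one {ε : ℝ} (hε : 0 < ε) (hε1 : ε ≤ 1) (b : ℝ) (j : ℕ) :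
    riemannSummand ε b j ≤ 1 := by
  unfold riemannSummand
  split_ifs with h
  · exact mul_rpow_neg_one_half_le_one hε hε1 (by linarith)
  · exact zero_le_one

/-- Here `s = √(2b)`; the excluded index `⌈s / ε⌉₊ - 1` is the only one with `s - ε < ε j < s`. -/
lemma riemannSummand_le_telescoping {ε b s : ℝ} (hε : 0 < ε) (hs : s ^ 2 = 2 * b) (hs0 : 0 < s)
    {j : ℕ} (hj : j ≠ ⌈s / ε⌉₊ - 1) :
    riemannSummand ε b j ≤ 3 * √2 / √s * (√(s + ε - ε * j) - √(s + ε - ε * (j + 1 : ℕ))) := by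
  unfold riemannSummand
  split_ifs with hjb
  · have hj0 : (0 : ℝ) ≤ ε * j := by positivity
    have hjs : ε * j < s := lt_of_pow_lt_pow_left₀ 2 hs0.le (by linarith)
    have hgap : ε ≤ s - ε * j := by
      by_contra! hgap
      refine hj (Nat.eq_sub_of_add_eq (Eq.symm ((Nat.ceil_eq_iff j.succ_ne_zero).2 ⟨?_, ?_⟩)))
      · rw [Nat.succ_sub_one, lt_div_iff₀ hε]; linarith
      · rw [div_le_iff₀ hε]; push_cast; linarith
    have ht : b - (ε * j) ^ 2 / 2 = (s ^ 2 - (ε * j) ^ 2) / 2 := by rw [hs]; ring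
    rw [ht, Real.rpow_neg_one_half_eq_inv_sqrt (by nlinarith), ← div_eq_mul_inv]
    convert div_sqrt_sq_sub_sq_le hj0 hε hgap using 4 <;> push_cast <;> ring
  · exact mul_nonneg (by positivity) (sub_nonneg.2 (sqrt_le_sqrt (by push_cast; linarith)))

/-- The Riemann-sum estimate `∑_{(εj)²/2 ≤ b − ε} ε (b − (εj)²/2)^{−1/2} ≤ C`,
uniformly in `ε ∈ (0,1]` and `b ≥ ε`. -/
theorem stmt_12 : ∃ C > 0, ∀ ε ∈ Set.Ioc (0:ℝ) 1, ∀ b : ℝ, ε ≤ b →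
    ∑' j : ℕ, (if (ε * (j : ℝ)) ^ 2 / 2 ≤ b - ε
        then ε * (b - (ε * (j : ℝ)) ^ 2 / 2) ^ (-(1:ℝ)/2) else 0) ≤ C := by
  refine ⟨7, by norm_num, ?_⟩
  rintro ε ⟨hε0, hε1⟩ b hb
  set s := √(2 * b)
  have hs : s ^ 2 = 2 * b := sq_sqrt (by linarith)
  have hs0 : 0 < s := sqrt_pos.2 (by linarith)
  have hεs : ε ≤ s := (le_sqrt hε0.le (by linarith)).2 (by nlinarith)
  have hv : Antitone fun j : ℕ => √(s + ε - ε * j) := fun i j hij => sqrt_le_sqrt (by gcongr)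
  calc ∑' j, riemannSummand ε b j ≤ 3 * √2 / √s * √(s + ε - ε * (0 : ℕ)) + 1 :=
        Real.tsum_le_of_le_telescoping (⌈s / ε⌉₊ - 1) (riemannSummand_nonneg hε0 b)
          (by positivity) hv (fun _ => sqrt_nonneg _)
          (fun _ hj => riemannSummand_le_telescoping hε0 hs hs0 hj)
          (riemannSummand_le_one hε0 hε1 b _)
    _ ≤ 3 * √2 / √s * (√2 * √s) + 1 := by
        gcongr
        rw [← sqrt_mul zero_le_two]
        exact sqrt_le_sqrt (by push_cast; linarith)
    _ = 7 := by
        field_simp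
        norm_num
end

section
/- Let h, R : ℝ → ℝ be Lebesgue integrable functions, both even (h(−u) = h(u) and R(−t) = R(t) for a.e. u, t), with ∫_ℝ h(u) du = 1 and ∫_ℝ R(t) dt = 1. Define Υ(r) := ∫_ℝ h(u) (∫_u^{u+r} R(t) dt) du for r ∈ ℝ. Then Υ(0) = 0, lim_{r → +∞} Υ(r) = 1/2, and lim_{r → −∞} Υ(r) = −1/2. -/
/-!
Evenness of `h` and `R` makes `Υ` odd: substituting `u ↦ -u` and `t ↦ -t` turns `Υ (-r)`
into `-Υ r`. Hence `2 Υ r = Υ r - Υ (-r) = ∫ h(u) ∫_{u-r}^{u+r} R(t) dt du`, and as `r → ∞`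
the inner integral tends to `∫ R` while staying bounded by `∫ |R|`, so by dominated
convergence `2 Υ r → ∫ h · ∫ R = 1`.
-/

open MeasureTheory Filter Topology

section IntervalIntegral

variable {E : Type*} [NormedAddCommGroup E] [NormedSpace ℝ E] {μ : Measure ℝ} {f : ℝ → E}

theorem norm_intervalIntegral_le_integral_norm (hf : Integrable f μ) (a b : ℝ) :
    ‖∫ t in a..b, f t ∂μ‖ ≤ ∫ t, ‖f t‖ ∂μ :=
  intervalIntegral.norm_integral_le_integral_norm_uIoc.trans
    (setIntegral_le_integral hf.norm (.of_forall fun _ => norm_nonneg _))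

theorem continuous_intervalIntegral_comp [NullSingletonClass μ] (hf : Integrable f μ)
    {a b : ℝ → ℝ} (ha : Continuous a) (hb : Continuous b) :
    Continuous fun u => ∫ t in a u..b u, f t ∂μ := by
  have hprim := intervalIntegral.continuous_primitive (fun _ _ => hf.intervalIntegrable) 0
  have hsplit : (fun u => ∫ t in a u..b u, f t ∂μ)
      = fun u => (∫ t in 0..b u, f t ∂μ) - ∫ t in 0..a u, f t ∂μ := by
    ext u
    exact (intervalIntegral.integral_interval_sub_left hf.intervalIntegrable
      hf.intervalIntegrable).symm
  rw [hsplit]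
  exact (hprim.comp hb).sub (hprim.comp ha)

theorem intervalIntegral_neg_neg_of_even (hf : ∀ᵐ t, f (-t) = f t) (a b : ℝ) :
    ∫ t in -a..-b, f t = -∫ t in a..b, f t := by
  rw [intervalIntegral.integral_symm, ← intervalIntegral.integral_comp_neg]
  congr 1
  exact intervalIntegral.integral_congr_ae (hf.mono fun t ht _ => ht)

variable {R : ℝ → ℝ}

theorem MeasureTheory.Integrable.mul_intervalIntegral {h : ℝ → ℝ} (hh : Integrable h)
    (hR : Integrable R) {a b : ℝ → ℝ} (ha : Continuous a) (hb : Continuous b) :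
    Integrable fun u => h u * ∫ t in a u..b u, R t := by
  refine (hh.bdd_mul (c := ∫ t, ‖R t‖)
    (continuous_intervalIntegral_comp hR ha hb).aestronglyMeasurable
    (.of_forall fun u => norm_intervalIntegral_le_integral_norm hR _ _)).congr ?_
  exact .of_forall fun u => mul_comm _ _

theorem tendsto_integral_mul_intervalIntegral_sub_add {h : ℝ → ℝ} (hh : Integrable h)
    (hR : Integrable R) :
    Tendsto (fun r => ∫ u, h u * ∫ t in u - r..u + r, R t) atTop
      (𝓝 ((∫ u, h u) * ∫ t, R t)) := by
  rw [← integral_mul_const]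
  refine tendsto_integral_filter_of_dominated_convergence (fun u => ‖h u‖ * ∫ t, ‖R t‖)
    (.of_forall fun r => (hh.mul_intervalIntegral hR (continuous_id.sub continuous_const)
      (continuous_id.add continuous_const)).aestronglyMeasurable)
    (.of_forall fun r => .of_forall fun u => ?_) (hh.norm.mul_const _)
    (.of_forall fun u => (intervalIntegral_tendsto_integral hR
      ((tendsto_atBot_add_const_left _ u tendsto_neg_atTop_atBot).congr fun r =>
        (sub_eq_add_neg u r).symm)
      (tendsto_atTop_add_const_left _ u tendsto_id)).const_mul (h u))
  rw [norm_mul]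
  exact mul_le_mul_of_nonneg_left (norm_intervalIntegral_le_integral_norm hR _ _) (norm_nonneg _)

end IntervalIntegral

/-- The edge response (discrete transition behaviour) function `Υ`. -/
noncomputable def edgeResponse (h R : ℝ → ℝ) (r : ℝ) : ℝ :=
  ∫ u, h u * ∫ t in u..u + r, R t

section EdgeResponse

variable {h R : ℝ → ℝ}

theorem edgeResponse_zero : edgeResponse h R 0 = 0 := by
  simp [edgeResponse]

theorem edgeResponse_neg (hh : ∀ᵐ u, h (-u) = h u) (hR : ∀ᵐ t, R (-t) = R t) (r : ℝ) :
    edgeResponse h R (-r) = -edgeResponse h R r := by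
  unfold edgeResponse
  rw [← integral_neg_eq_self, ← integral_neg]
  refine integral_congr_ae (hh.mono fun u hu => ?_)
  beta_reduce
  rw [hu, ← neg_add, intervalIntegral_neg_neg_of_even hR, mul_neg]

theorem two_mul_edgeResponse (hh_int : Integrable h) (hR_int : Integrable R)
    (hh : ∀ᵐ u, h (-u) = h u) (hR : ∀ᵐ t, R (-t) = R t) (r : ℝ) :
    2 * edgeResponse h R r = ∫ u, h u * ∫ t in u - r..u + r, R t := by
  have hint (s : ℝ) : Integrable fun u => h u * ∫ t in u..u + s, R t :=
    hh_int.mul_intervalIntegral hR_int continuous_id (continuous_add_const s)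
  calc 2 * edgeResponse h R r = edgeResponse h R r - edgeResponse h R (-r) := by
        rw [edgeResponse_neg hh hR]; ring
    _ = ∫ u, h u * ∫ t in u - r..u + r, R t := by
        unfold edgeResponse
        rw [← integral_sub (hint r) (hint (-r))]
        congr 1 with u
        rw [← mul_sub, intervalIntegral.integral_interval_sub_left hR_int.intervalIntegrable
          hR_int.intervalIntegrable, sub_eq_add_neg]

theorem tendsto_edgeResponse_atTop (hh_int : Integrable h) (hR_int : Integrable R)
    (hh : ∀ᵐ u, h (-u) = h u) (hR : ∀ᵐ t, R (-t) = R t) :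
    Tendsto (edgeResponse h R) atTop (𝓝 ((∫ u, h u) * (∫ t, R t) / 2)) := by
  have h2 := tendsto_integral_mul_intervalIntegral_sub_add hh_int hR_int
  simp_rw [← two_mul_edgeResponse hh_int hR_int hh hR] at h2
  simpa using h2.div_const 2

theorem tendsto_edgeResponse_atBot (hh_int : Integrable h) (hR_int : Integrable R)
    (hh : ∀ᵐ u, h (-u) = h u) (hR : ∀ᵐ t, R (-t) = R t) :
    Tendsto (edgeResponse h R) atBot (𝓝 (-((∫ u, h u) * (∫ t, R t) / 2))) := by
  have hneg :=
    (tendsto_edgeResponse_atTop hh_int hR_int hh hR).neg.comp tendsto_neg_atBot_atTop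
  refine hneg.congr fun r => ?_
  simp [Function.comp, edgeResponse_neg hh hR]

end EdgeResponse

/-- Properties of the DTB function `Υ(r) = ∫ h(u) ∫_u^{u+r} R(t) dt du` for even,
integrable, normalized `h` and `R`: it vanishes at `0` and tends to `±1/2` at `±∞`. -/
theorem stmt_17 (h R : ℝ → ℝ)
    (hh_int : Integrable h) (hR_int : Integrable R)
    (hh_even : ∀ᵐ u ∂(volume : Measure ℝ), h (-u) = h u)
    (hR_even : ∀ᵐ t ∂(volume : Measure ℝ), R (-t) = R t)
    (hh_norm : (∫ u, h u) = 1) (hR_norm : (∫ t, R t) = 1) :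
    (∫ u, h u * ∫ t in u..(u + 0), R t) = 0 ∧
    Filter.Tendsto (fun r : ℝ => ∫ u, h u * ∫ t in u..(u + r), R t)
      Filter.atTop (nhds (1/2)) ∧
    Filter.Tendsto (fun r : ℝ => ∫ u, h u * ∫ t in u..(u + r), R t)
      Filter.atBot (nhds (-(1/2))) := by
  have hjump : (∫ u, h u) * (∫ t, R t) / 2 = 1 / 2 := by rw [hh_norm, hR_norm, one_mul]
  refine ⟨edgeResponse_zero, ?_, ?_⟩
  · exact hjump ▸ tendsto_edgeResponse_atTop hh_int hR_int hh_even hR_even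
  · exact hjump ▸ tendsto_edgeResponse_atBot hh_int hR_int hh_even hR_even
end

section
/- Let a > 0 and κ > 0. The function λ ↦ (a + κ|λ|³)^{−1} is Lebesgue integrable on ℝ, and the function R : ℝ → ℂ defined by R(t) := ∫_ℝ e^{−iλt} (a + κ|λ|³)^{−1} dλ is real-valued, even, continuous, and Lebesgue integrable on ℝ. -/
/-!
`R̃(λ) = (a + κ|λ|³)⁻¹` is twice differentiable because `|λ|³` is, and `R̃`, `R̃'`, `R̃''` are all
bounded by constant multiples of `R̃ = O((1 + λ²)⁻¹)`, so all three are integrable. `R(t)` is the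
Fourier transform of `R̃` at `t / 2π`. It is continuous because `R̃ ∈ L¹`, and integrable because
integrating by parts twice bounds `(1 + ξ²) ‖𝓕 R̃ ξ‖` by `‖R̃‖₁ + ‖R̃''‖₁`. Evenness and realness of
`R` come from evenness and realness of `R̃`.
-/

open MeasureTheory Complex ComplexConjugate FourierTransform
open scoped Real

/-- The inverse Fourier transform `R(t) = ∫ e^{−iλt} (a + κ|λ|³)^{−1} dλ`. -/
noncomputable def Rker (a κ : ℝ) (t : ℝ) : ℂ :=
  ∫ lam : ℝ, Complex.exp (-Complex.I * (lam : ℂ) * (t : ℂ)) / ((a + κ * |lam| ^ 3 : ℝ) : ℂ)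

namespace Real

variable {E : Type*} [NormedAddCommGroup E] [NormedSpace ℂ E]

section
variable {V : Type*} [NormedAddCommGroup V] [InnerProductSpace ℝ V] [MeasurableSpace V]
  [BorelSpace V] [FiniteDimensional ℝ V]

theorem norm_fourier_le_integral_norm (f : V → E) (w : V) : ‖𝓕 f w‖ ≤ ∫ v, ‖f v‖ :=
  VectorFourier.norm_fourierIntegral_le_integral_norm 𝐞 volume (innerₗ V) f w

theorem continuous_fourier_of_integrable {f : V → E} (hf : Integrable f) : Continuous (𝓕 f) :=
  VectorFourier.fourierIntegral_continuous continuous_fourierChar continuous_inner hf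

end

theorem fourier_eq_smul_fourier_of_hasDerivAt {f f' : ℝ → E} (hf : ∀ x, HasDerivAt f (f' x) x)
    (hfi : Integrable f) (hf'i : Integrable f') (w : ℝ) :
    𝓕 f' w = (2 * π * I * w) • 𝓕 f w := by
  have hderiv : deriv f = f' := funext fun x => (hf x).deriv
  rw [← hderiv, fourier_deriv hfi (fun x => (hf x).differentiableAt) (hderiv ▸ hf'i)]

theorem one_add_sq_mul_norm_fourier_le {f f' f'' : ℝ → E} (hf : ∀ x, HasDerivAt f (f' x) x)
    (hf' : ∀ x, HasDerivAt f' (f'' x) x) (hfi : Integrable f) (hf'i : Integrable f')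
    (hf''i : Integrable f'') (w : ℝ) :
    (1 + w ^ 2) * ‖𝓕 f w‖ ≤ (∫ v, ‖f v‖) + ∫ v, ‖f'' v‖ := by
  have h2 : (2 * π * w) ^ 2 * ‖𝓕 f w‖ = ‖𝓕 f'' w‖ := by
    rw [fourier_eq_smul_fourier_of_hasDerivAt hf' hf'i hf''i,
      fourier_eq_smul_fourier_of_hasDerivAt hf hfi hf'i]
    simp only [norm_smul, norm_mul, Complex.norm_ofNat, norm_real, norm_I, Real.norm_eq_abs,
      abs_of_pos pi_pos, mul_one]
    rw [mul_pow, ← sq_abs w]; ring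
  have hpi : 1 ≤ (2 * π) ^ 2 := by nlinarith [pi_gt_three]
  calc (1 + w ^ 2) * ‖𝓕 f w‖ ≤ ‖𝓕 f w‖ + (2 * π * w) ^ 2 * ‖𝓕 f w‖ := by
        rw [mul_pow]
        nlinarith [mul_le_mul_of_nonneg_right hpi (mul_nonneg (sq_nonneg w) (norm_nonneg (𝓕 f w)))]
    _ ≤ _ := by
      rw [h2]
      exact add_le_add (norm_fourier_le_integral_norm f w) (norm_fourier_le_integral_norm f'' w)

theorem integrable_fourier_of_hasDerivAt {f f' f'' : ℝ → E} (hf : ∀ x, HasDerivAt f (f' x) x)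
    (hf' : ∀ x, HasDerivAt f' (f'' x) x) (hfi : Integrable f) (hf'i : Integrable f')
    (hf''i : Integrable f'') : Integrable (𝓕 f) := by
  refine ((integrable_inv_one_add_sq.const_mul ((∫ v, ‖f v‖) + ∫ v, ‖f'' v‖)).mono'
    (continuous_fourier_of_integrable hfi).aestronglyMeasurable (.of_forall fun w => ?_))
  rw [← div_eq_mul_inv, le_div_iff₀' (by positivity)]
  exact one_add_sq_mul_norm_fourier_le hf hf' hfi hf'i hf''i w

end Real

theorem hasDerivAt_mul_abs (x : ℝ) : HasDerivAt (fun y => y * |y|) (2 * |x|) x := by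
  have off_zero : ∀ y ≠ (0 : ℝ), HasDerivAt (fun y => y * |y|) (2 * |y|) y := fun y hy =>
    ((hasDerivAt_id' y).mul (hasDerivAt_abs hy)).congr_deriv (by rw [self_mul_sign]; ring)
  rcases eq_or_ne x 0 with rfl | hx
  · exact hasDerivAt_of_hasDerivAt_of_ne off_zero (by fun_prop) (by fun_prop)
  · exact off_zero x hx

theorem hasDerivAt_abs_pow_three (x : ℝ) : HasDerivAt (fun y => |y| ^ 3) (3 * (x * |x|)) x := by
  have hcube : (fun y : ℝ => |y| ^ 3) = fun y => y * (y * |y|) := by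
    funext y; rw [← mul_assoc, ← sq, ← sq_abs]; ring
  rw [hcube]
  exact ((hasDerivAt_id' x).mul (hasDerivAt_mul_abs x)).congr_deriv (by ring)

theorem abs_pow_le_one_add_abs_pow {k n : ℕ} (hkn : k ≤ n) (x : ℝ) : |x| ^ k ≤ 1 + |x| ^ n := by
  rcases le_total |x| 1 with hx | hx
  · linarith [pow_le_one₀ (abs_nonneg x) hx (n := k), pow_nonneg (abs_nonneg x) n]
  · linarith [pow_le_pow_right₀ hx hkn]

namespace Rker

/-- The paper's `R̃`. -/
noncomputable def symbol (a κ x : ℝ) : ℝ := (a + κ * |x| ^ 3)⁻¹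

variable {a κ : ℝ}

theorem symbol_pos (ha : 0 < a) (hκ : 0 < κ) (x : ℝ) : 0 < symbol a κ x := by
  unfold symbol; positivity

theorem one_add_abs_pow_three_mul_symbol_le (ha : 0 < a) (hκ : 0 < κ) (x : ℝ) :
    (1 + |x| ^ 3) * symbol a κ x ≤ a⁻¹ + κ⁻¹ := by
  have hden : 0 < a + κ * |x| ^ 3 := by positivity
  have hexpand : (a⁻¹ + κ⁻¹) * (a + κ * |x| ^ 3) = 1 + |x| ^ 3 + (κ / a * |x| ^ 3 + a / κ) := by
    field_simp; ring
  rw [symbol, ← div_eq_mul_inv, div_le_iff₀ hden, hexpand]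
  have : 0 ≤ κ / a * |x| ^ 3 + a / κ := by positivity
  linarith

theorem abs_pow_mul_symbol_le (ha : 0 < a) (hκ : 0 < κ) {k : ℕ} (hk : k ≤ 3) (x : ℝ) :
    |x| ^ k * symbol a κ x ≤ a⁻¹ + κ⁻¹ :=
  (mul_le_mul_of_nonneg_right (abs_pow_le_one_add_abs_pow hk x) (symbol_pos ha hκ x).le).trans
    (one_add_abs_pow_three_mul_symbol_le ha hκ x)

theorem symbol_le (ha : 0 < a) (hκ : 0 < κ) (x : ℝ) :
    symbol a κ x ≤ 2 * (a⁻¹ + κ⁻¹) * (1 + x ^ 2)⁻¹ := by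
  rw [← div_eq_mul_inv, le_div_iff₀ (by positivity), ← sq_abs x]
  linarith [abs_pow_mul_symbol_le ha hκ (k := 0) (by norm_num) x,
    abs_pow_mul_symbol_le ha hκ (k := 2) (by norm_num) x]

theorem continuous_symbol (ha : 0 < a) (hκ : 0 < κ) : Continuous (symbol a κ) :=
  Continuous.inv₀ (by fun_prop) fun x => by positivity

theorem integrable_symbol (ha : 0 < a) (hκ : 0 < κ) : Integrable (symbol a κ) :=
  (integrable_inv_one_add_sq.const_mul (2 * (a⁻¹ + κ⁻¹))).mono'
    (continuous_symbol ha hκ).aestronglyMeasurable (.of_forall fun x => by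
      rw [Real.norm_eq_abs, abs_of_pos (symbol_pos ha hκ x)]; exact symbol_le ha hκ x)

theorem integrable_of_abs_le_mul_symbol (ha : 0 < a) (hκ : 0 < κ) {g : ℝ → ℝ} (hg : Continuous g)
    (C : ℝ) (hle : ∀ x, |g x| ≤ C * symbol a κ x) : Integrable g :=
  ((integrable_symbol ha hκ).const_mul C).mono' hg.aestronglyMeasurable (.of_forall hle)

theorem hasDerivAt_symbol (ha : 0 < a) (hκ : 0 < κ) (x : ℝ) :
    HasDerivAt (symbol a κ) (-3 * κ * (x * |x|) * symbol a κ x ^ 2) x := by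
  have hden : a + κ * |x| ^ 3 ≠ 0 := by positivity
  refine (((hasDerivAt_abs_pow_three x).const_mul κ).const_add a).inv hden |>.congr_deriv ?_
  simp only [symbol, inv_pow]
  field_simp

theorem hasDerivAt_deriv_symbol (ha : 0 < a) (hκ : 0 < κ) (x : ℝ) :
    HasDerivAt (fun y => -3 * κ * (y * |y|) * symbol a κ y ^ 2)
      ((18 * κ ^ 2 * x ^ 4 * symbol a κ x - 6 * κ * |x|) * symbol a κ x ^ 2) x := by
  refine (((hasDerivAt_mul_abs x).const_mul (-3 * κ)).mul
    ((hasDerivAt_symbol ha hκ x).pow 2)).congr_deriv ?_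
  have : (x * |x|) * (x * |x|) = x ^ 4 := by rw [mul_mul_mul_comm, abs_mul_abs_self]; ring
  rw [Pi.pow_apply]
  linear_combination (18 * κ ^ 2 * symbol a κ x ^ 3) * this

theorem integrable_deriv_symbol (ha : 0 < a) (hκ : 0 < κ) :
    Integrable (fun x => -3 * κ * (x * |x|) * symbol a κ x ^ 2) := by
  have hcont := continuous_symbol ha hκ
  refine integrable_of_abs_le_mul_symbol ha hκ (by fun_prop) (3 * κ * (a⁻¹ + κ⁻¹)) fun x => ?_
  have hf := symbol_pos ha hκ x
  calc |-3 * κ * (x * |x|) * symbol a κ x ^ 2|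
        = 3 * κ * (|x| ^ 2 * symbol a κ x) * symbol a κ x := by
          simp only [abs_mul, abs_neg, abs_abs, abs_pow, abs_of_pos hκ, abs_of_pos hf,
            Nat.abs_ofNat]
          ring
    _ ≤ 3 * κ * (a⁻¹ + κ⁻¹) * symbol a κ x := by
          gcongr; exact abs_pow_mul_symbol_le ha hκ (by norm_num) x

theorem integrable_deriv_deriv_symbol (ha : 0 < a) (hκ : 0 < κ) :
    Integrable (fun x => (18 * κ ^ 2 * x ^ 4 * symbol a κ x - 6 * κ * |x|) * symbol a κ x ^ 2) := by
  have hcont := continuous_symbol ha hκ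
  set M := a⁻¹ + κ⁻¹
  refine integrable_of_abs_le_mul_symbol ha hκ (by fun_prop) (18 * κ ^ 2 * M ^ 2 + 6 * κ * M)
    fun x => ?_
  have hf := symbol_pos ha hκ x
  have h1 : |x| ^ 1 * symbol a κ x ≤ M := abs_pow_mul_symbol_le ha hκ (by norm_num) x
  have h2 : |x| ^ 2 * symbol a κ x ≤ M := abs_pow_mul_symbol_le ha hκ (by norm_num) x
  have hA : 0 ≤ 18 * κ ^ 2 * x ^ 4 * symbol a κ x := by positivity
  have hB : 0 ≤ 6 * κ * |x| := by positivity
  calc |(18 * κ ^ 2 * x ^ 4 * symbol a κ x - 6 * κ * |x|) * symbol a κ x ^ 2|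
        = |(18 * κ ^ 2 * x ^ 4 * symbol a κ x - 6 * κ * |x|)| * symbol a κ x ^ 2 := by
          rw [abs_mul, abs_of_pos (pow_pos hf 2)]
    _ ≤ (18 * κ ^ 2 * x ^ 4 * symbol a κ x + 6 * κ * |x|) * symbol a κ x ^ 2 := by
          gcongr
          exact abs_le.2 ⟨by linarith, by linarith⟩
    _ = (18 * κ ^ 2 * (|x| ^ 2 * symbol a κ x) ^ 2 + 6 * κ * (|x| ^ 1 * symbol a κ x))
          * symbol a κ x := by rw [sq_abs]; ring
    _ ≤ (18 * κ ^ 2 * M ^ 2 + 6 * κ * M) * symbol a κ x := by gcongr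

theorem integrable_fourier_symbol (ha : 0 < a) (hκ : 0 < κ) :
    Integrable (𝓕 fun x => (symbol a κ x : ℂ)) :=
  Real.integrable_fourier_of_hasDerivAt (fun x => (hasDerivAt_symbol ha hκ x).ofReal_comp)
    (fun x => (hasDerivAt_deriv_symbol ha hκ x).ofReal_comp) (integrable_symbol ha hκ).ofReal
    (integrable_deriv_symbol ha hκ).ofReal (integrable_deriv_deriv_symbol ha hκ).ofReal

end Rker

theorem Rker_eq_fourier_symbol (a κ : ℝ) :
    Rker a κ = fun t => 𝓕 (fun x => (Rker.symbol a κ x : ℂ)) (t / (2 * π)) := by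
  funext t
  rw [Rker, Real.fourier_real_eq_integral_exp_smul]
  congr 1 with v
  rw [smul_eq_mul, Rker.symbol, ofReal_inv, ← div_eq_mul_inv]
  congr 2
  push_cast
  field_simp

theorem Rker_neg (a κ t : ℝ) : Rker a κ (-t) = Rker a κ t := by
  rw [Rker, Rker, ← integral_neg_eq_self]
  simp only [abs_neg, ofReal_neg, mul_neg, neg_mul, neg_neg]

theorem conj_Rker (a κ t : ℝ) : conj (Rker a κ t) = Rker a κ (-t) := by
  simp only [Rker, ← integral_conj, map_div₀, ← exp_conj, conj_ofReal, map_mul, map_neg, conj_I,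
    ofReal_neg, neg_neg, mul_neg, neg_mul]

theorem Rker_im_eq_zero (a κ t : ℝ) : (Rker a κ t).im = 0 := by
  rw [← conj_eq_iff_im, conj_Rker, Rker_neg]

theorem continuous_Rker {a κ : ℝ} (ha : 0 < a) (hκ : 0 < κ) : Continuous (Rker a κ) := by
  rw [Rker_eq_fourier_symbol]
  exact (Real.continuous_fourier_of_integrable (Rker.integrable_symbol ha hκ).ofReal).comp
    (continuous_id.div_const _)

theorem integrable_Rker {a κ : ℝ} (ha : 0 < a) (hκ : 0 < κ) : Integrable (Rker a κ) := by
  rw [Rker_eq_fourier_symbol]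
  simp_rw [div_eq_mul_inv]
  exact (Rker.integrable_fourier_symbol ha hκ).comp_mul_right' (by positivity)

/-- For `a, κ > 0` the function `λ ↦ (a + κ|λ|³)^{−1}` is integrable, and its inverse
Fourier transform `R(t) = ∫ e^{−iλt}(a + κ|λ|³)^{−1} dλ` is real-valued, even,
continuous, and integrable. -/
theorem stmt_18 (a κ : ℝ) (ha : 0 < a) (hκ : 0 < κ) :
    MeasureTheory.Integrable (fun lam : ℝ => (a + κ * |lam| ^ 3)⁻¹) ∧
    (∀ t : ℝ, (Rker a κ t).im = 0) ∧
    (∀ t : ℝ, Rker a κ (-t) = Rker a κ t) ∧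
    Continuous (Rker a κ) ∧
    MeasureTheory.Integrable (Rker a κ) :=
  ⟨Rker.integrable_symbol ha hκ, Rker_im_eq_zero a κ, Rker_neg a κ, continuous_Rker ha hκ,
    integrable_Rker ha hκ⟩
end

section
/- There exists a constant C > 0 such that for every r ∈ (0, 1/2], the function s ↦ |ln|s| − ln|s − r|| is Lebesgue integrable on [−1, 1] and ∫_{−1}^{1} |ln|s| − ln|s − r|| ds ≤ C r log(1/r). -/
/-!
The difference `log |s| - log |s - r|` changes sign only at `s = r / 2`, where `|s| = |s - r|`.
Splitting `[-1, 1]` there and integrating with the primitive `x log x - x` of `log` gives the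
exact value `(1 + r) log (1 + r) - (1 - r) log (1 - r) + 2 r log (2 / r)`. The first two terms
are `O(r)` and `log 2 ≤ log (1 / r)` for `r ≤ 1 / 2`, so everything is `O(r log (1 / r))`.
-/

open MeasureTheory Set Real

lemma intervalIntegrable_log_sub (r a b : ℝ) :
    IntervalIntegrable (fun s => log (s - r)) volume a b := by
  simpa using
    (intervalIntegral.intervalIntegrable_log' (a := a - r) (b := b - r)).comp_sub_right r

lemma intervalIntegrable_log_sub_log_sub (r a b : ℝ) :
    IntervalIntegrable (fun s => log s - log (s - r)) volume a b :=
  intervalIntegral.intervalIntegrable_log'.sub (intervalIntegrable_log_sub r a b)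

lemma integral_log_sub_log_sub (r a b : ℝ) :
    ∫ s in a..b, (log s - log (s - r)) =
      b * log b - a * log a - ((b - r) * log (b - r) - (a - r) * log (a - r)) := by
  rw [intervalIntegral.integral_sub intervalIntegral.intervalIntegrable_log'
      (intervalIntegrable_log_sub r a b),
    intervalIntegral.integral_comp_sub_right (fun x => log x) r, integral_log, integral_log]
  ring

lemma log_le_log_of_sq_le {x y : ℝ} (hx : x ≠ 0) (h : x ^ 2 ≤ y ^ 2) : log x ≤ log y := by
  rw [← log_abs x, ← log_abs y]
  exact log_le_log (abs_pos.2 hx) (sq_le_sq.1 h)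

theorem integral_abs_log_sub_log_sub {r : ℝ} (hr : 0 < r) (hr2 : r ≤ 2) :
    ∫ s in Icc (-1 : ℝ) 1, |log s - log (s - r)| =
      (1 + r) * log (1 + r) - (1 - r) * log (1 - r) - 2 * r * log (r / 2) := by
  -- `log 0 = 0`, so the sign of the integrand is only right away from `s = 0` and `s = r`.
  have hae : ∀ᵐ s : ℝ, s ≠ 0 ∧ s ≠ r :=
    ((countable_singleton 0).ae_notMem volume).and ((countable_singleton r).ae_notMem volume)
  have left : ∫ s in (-1)..(r / 2), |log s - log (s - r)| =
      -∫ s in (-1)..(r / 2), (log s - log (s - r)) := by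
    rw [← intervalIntegral.integral_neg]
    refine intervalIntegral.integral_congr_ae ?_
    filter_upwards [hae] with s hne hmem
    rw [uIoc_of_le (by linarith)] at hmem
    exact abs_of_nonpos (sub_nonpos.2 (log_le_log_of_sq_le hne.1 (by nlinarith [hmem.2])))
  have right : ∫ s in (r / 2)..1, |log s - log (s - r)| =
      ∫ s in (r / 2)..1, (log s - log (s - r)) := by
    refine intervalIntegral.integral_congr_ae ?_
    filter_upwards [hae] with s hne hmem
    rw [uIoc_of_le (by linarith)] at hmem
    exact abs_of_nonneg
      (sub_nonneg.2 (log_le_log_of_sq_le (sub_ne_zero.2 hne.2) (by nlinarith [hmem.1])))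
  rw [integral_Icc_eq_integral_Ioc, ← intervalIntegral.integral_of_le (by norm_num),
    ← intervalIntegral.integral_add_adjacent_intervals (b := r / 2)
      (intervalIntegrable_log_sub_log_sub r _ _).abs
      (intervalIntegrable_log_sub_log_sub r _ _).abs,
    left, right, integral_log_sub_log_sub, integral_log_sub_log_sub,
    show (-1 : ℝ) - r = -(1 + r) by ring, show r / 2 - r = -(r / 2) by ring,
    log_neg_eq_log, log_neg_eq_log, log_neg_eq_log, log_one]
  ring

theorem integral_abs_log_sub_log_sub_le {r : ℝ} (hr : 0 < r) (hr2 : r ≤ 1 / 2) :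
    ∫ s in Icc (-1 : ℝ) 1, |log s - log (s - r)| ≤ 8 * r * log (1 / r) := by
  rw [integral_abs_log_sub_log_sub hr (by linarith)]
  have hplus : (1 + r) * log (1 + r) ≤ (1 + r) * r :=
    mul_le_mul_of_nonneg_left (by linarith [log_le_sub_one_of_pos (x := 1 + r) (by linarith)])
      (by linarith)
  have hminus : -r ≤ (1 - r) * log (1 - r) := by
    have h := mul_le_mul_of_nonneg_left (one_sub_inv_le_log_of_pos (x := 1 - r) (by linarith))
      (by linarith : (0 : ℝ) ≤ 1 - r)
    rwa [mul_sub, mul_inv_cancel₀ (by linarith), mul_one, sub_sub_cancel_left] at h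
  have hhalf : log (r / 2) = -log (1 / r) - log 2 := by
    rw [log_div hr.ne' two_ne_zero, one_div, log_inv]
    ring
  have htwo : log 2 ≤ log (1 / r) := log_le_log two_pos (by rw [le_div_iff₀ hr]; linarith)
  have hlog2 := log_two_gt_d9
  nlinarith [mul_le_mul_of_nonneg_left htwo hr.le]

/-- Logarithmic integral estimate: `∫_{−1}^{1} |ln|s| − ln|s − r|| ds ≤ C r log(1/r)`
uniformly in `r ∈ (0, 1/2]`. -/
theorem stmt_19 : ∃ C > 0, ∀ r ∈ Set.Ioc (0:ℝ) (1/2),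
    MeasureTheory.IntegrableOn
      (fun s => abs (Real.log (abs s) - Real.log (abs (s - r)))) (Set.Icc (-1) 1) ∧
    (∫ s in Set.Icc (-1:ℝ) 1, abs (Real.log (abs s) - Real.log (abs (s - r))))
      ≤ C * r * Real.log (1 / r) := by
  refine ⟨8, by norm_num, fun r ⟨hr, hr2⟩ => ?_⟩
  simp only [log_abs]
  exact ⟨(intervalIntegrable_iff_integrableOn_Icc_of_le (by norm_num)).1
      (intervalIntegrable_log_sub_log_sub r (-1) 1).abs,
    integral_abs_log_sub_log_sub_le hr hr2⟩
end
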